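/- arXiv:2304.02164 — 6 statements merged into one kernel-verified Lean document; each statement's English description precedes it below -/
import Mathlib

section
/- For every R > 0 there exist c > 0 and n₀ such that the following holds. Let G be a graph on n ≥ n₀ vertices with average degree d, minimum degree δ, maximum degree Δ, and let λ > 0 satisfy |λᵢ(A)| ≤ λ for every eigenvalue of the adjacency matrix A other than the largest one. If Δ − δ ≤ Rλ and λ ≤ c·d, then for all vertex subsets U, W we have |e(U,W) − (d/n)·|U|·|W|| ≤ (10R + 1)·λ·√(|U|·|W|), where e(U,W) is the number of ordered pairs (u,w) with u ∈ U, w ∈ W, and uw an edge of G. -/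
open SimpleGraph Matrix Finset
open scoped RealInnerProductSpace

/-- The degree of a vertex. -/
noncomputable def degOf {n : ℕ} (G : SimpleGraph (Fin n)) (v : Fin n) : ℕ :=
  (G.neighborSet v).ncard

/-- The minimum degree of `G`. -/
noncomputable def minDeg {n : ℕ} (G : SimpleGraph (Fin n)) : ℕ := sInf (Set.range (degOf G))

/-- The maximum degree of `G`. -/
noncomputable def maxDeg {n : ℕ} (G : SimpleGraph (Fin n)) : ℕ := sSup (Set.range (degOf G))

/-- The average degree of `G`. -/
noncomputable def avgDeg {n : ℕ} (G : SimpleGraph (Fin n)) : ℝ :=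
  (∑ v : Fin n, (degOf G v : ℝ)) / n

open Classical in
/-- The adjacency matrix of `G`, with real entries. -/
noncomputable def adjMat {n : ℕ} (G : SimpleGraph (Fin n)) : Matrix (Fin n) (Fin n) ℝ :=
  Matrix.of fun i j => if G.Adj i j then 1 else 0

lemma adjMat_isHermitian {n : ℕ} (G : SimpleGraph (Fin n)) : (adjMat G).IsHermitian := by
  ext i j
  simp only [adjMat, Matrix.conjTranspose_apply, Matrix.of_apply, star_trivial]
  rw [G.adj_comm]

/-- The eigenvalues of the adjacency matrix of `G` (with multiplicity, indexed by `Fin n`). -/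
noncomputable def adjEigs {n : ℕ} (G : SimpleGraph (Fin n)) : Fin n → ℝ :=
  (adjMat_isHermitian G).eigenvalues

/-- `e(U,W)`: the number of ordered pairs `(u,w)`, `u ∈ U`, `w ∈ W`, `uw ∈ E(G)`. -/
noncomputable def ePairs {n : ℕ} (G : SimpleGraph (Fin n)) (U W : Set (Fin n)) : ℕ :=
  {p : Fin n × Fin n | p.1 ∈ U ∧ p.2 ∈ W ∧ G.Adj p.1 p.2}.ncard

/- ---------- auxiliary definitions and lemmas ---------- -/

open Classical in
/-- Indicator vector of a set, as an element of Euclidean space. -/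
noncomputable def chiVec {n : ℕ} (X : Set (Fin n)) : EuclideanSpace ℝ (Fin n) :=
  WithLp.toLp 2 (fun i => if i ∈ X then (1:ℝ) else 0)

open Classical in
lemma chiVec_sum {n : ℕ} (X : Set (Fin n)) : ∑ i, chiVec X i = (X.ncard : ℝ) := by
  rw [Set.ncard_eq_toFinset_card' X]
  simp [chiVec, PiLp.toLp_apply]

lemma chiVec_mul_self {n : ℕ} (X : Set (Fin n)) (i : Fin n) :
    chiVec X i * chiVec X i = chiVec X i := by
  classical
  simp only [chiVec, PiLp.toLp_apply]
  split_ifs <;> ring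

lemma chiVec_dot {n : ℕ} (X : Set (Fin n)) : ∑ i, chiVec X i * chiVec X i = (X.ncard : ℝ) := by
  simp_rw [chiVec_mul_self]; exact chiVec_sum X

open Classical in
lemma ePairs_eq_sum {n : ℕ} (G : SimpleGraph (Fin n)) (U W : Set (Fin n)) :
    ((ePairs G U W : ℝ)) =
      ∑ u : Fin n, ∑ w : Fin n, chiVec U u * (adjMat G u w * chiVec W w) := by
  rw [ePairs, Set.ncard_eq_toFinset_card', Set.toFinset_setOf, Finset.card_filter]
  push_cast
  rw [Fintype.sum_prod_type]
  refine Finset.sum_congr rfl fun u _ => Finset.sum_congr rfl fun w _ => ?_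
  simp only [chiVec, PiLp.toLp_apply, adjMat, Matrix.of_apply]
  split_ifs <;> simp_all

open Classical in
lemma adjMat_row_sum {n : ℕ} (G : SimpleGraph (Fin n)) (v : Fin n) :
    ∑ j, adjMat G v j = (degOf G v : ℝ) := by
  rw [degOf, Set.ncard_eq_toFinset_card']
  have h : (G.neighborSet v).toFinset = Finset.univ.filter (fun j => G.Adj v j) := by
    ext j; simp
  rw [h, Finset.card_filter]
  push_cast
  refine Finset.sum_congr rfl fun j _ => ?_
  simp [adjMat]

lemma abs_le_of_sq_le' {x c : ℝ} (hc : 0 ≤ c) (h : x ^ 2 ≤ c ^ 2) : |x| ≤ c := by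
  nlinarith [abs_nonneg x, sq_abs x]

lemma habs_sub (x y : ℝ) : |x - y| ≤ |x| + |y| := by
  rw [sub_eq_add_neg]
  exact (abs_add_le x (-y)).trans (by rw [abs_neg])

lemma arith_dz {d lam R Nz : ℝ} (h4 : 4*lam ≤ d) (hz : 0 ≤ Nz)
    (hkey : (d-lam)*Nz ≤ R*lam) : d*Nz ≤ (4/3)*(R*lam) := by
  nlinarith [mul_nonneg (by linarith : (0:ℝ) ≤ d/4 - lam) hz]

lemma arith_zhalf {d lam R Nz : ℝ} (hdz : d*Nz ≤ (4/3)*(R*lam)) (h4R : 4*(R*lam) ≤ d)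
    (hd : 0 < d) (hz : 0 ≤ Nz) : Nz ≤ 1/2 := by
  have h1 : d * Nz ≤ d * (1/3) := by linarith
  have := (mul_le_mul_iff_right₀ hd).mp h1
  linarith

lemma arith_alpha {α Nz : ℝ} (hz : Nz ≤ 1/2) (hz0 : 0 ≤ Nz) (hαz : α^2 = 1 - Nz^2) :
    1/2 ≤ |α| := by
  nlinarith [abs_nonneg α, sq_abs α]

lemma arith_lam1d {α x Rl : ℝ} (h : |α*x| ≤ Rl) (hα : 1/2 ≤ |α|) : |x| ≤ 2*Rl := by
  rw [abs_mul] at h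
  nlinarith [abs_nonneg x, abs_nonneg α]

lemma arith_sq {mu lam t : ℝ} (h : |mu| ≤ lam) : mu * t * (mu * t) ≤ lam^2 * (t*t) := by
  have h2 : mu^2 ≤ lam^2 := by nlinarith [sq_abs mu, abs_nonneg mu]
  nlinarith [mul_nonneg (sub_nonneg.mpr h2) (mul_self_nonneg t)]

lemma step2arith {R lam d lam1 α Nz sU sW zU zW qU qW : ℝ}
    (hRl : 0 ≤ R * lam) (hd : 0 ≤ d)
    (h1 : |lam1 - d| ≤ 2*(R*lam)) (h2 : d*Nz ≤ (4/3)*(R*lam)) (h3 : Nz ≤ 1/2) (h4 : 0 ≤ Nz)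
    (hαz : α^2 = 1 - Nz^2)
    (h6 : |sU| ≤ qU) (h7 : |sW| ≤ qW) (h8 : |zU| ≤ Nz*qU) (h9 : |zW| ≤ Nz*qW)
    (hqU : 0 ≤ qU) (hqW : 0 ≤ qW) :
    |lam1 * (sU*sW) - d*(α*sU+zU)*(α*sW+zW)| ≤ 6*R*lam*(qU*qW) := by
  have hα1 : |α| ≤ 1 := abs_le_of_sq_le' one_pos.le (by nlinarith [sq_nonneg Nz])
  have e2 : (d*Nz)*Nz ≤ (2/3)*(R*lam) := by
    calc (d*Nz)*Nz ≤ ((4/3)*(R*lam))*Nz := mul_le_mul_of_nonneg_right h2 h4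
      _ ≤ ((4/3)*(R*lam))*(1/2) := mul_le_mul_of_nonneg_left h3 (by positivity)
      _ = (2/3)*(R*lam) := by ring
  have key : |lam1 - d*α^2| ≤ 2*(R*lam) + (2/3)*(R*lam) := by
    have e1 : |d - d*α^2| ≤ (2/3)*(R*lam) := by
      have hnn : (0:ℝ) ≤ d - d*α^2 := by nlinarith [sq_nonneg α]
      rw [abs_of_nonneg hnn]
      have e3 : d - d*α^2 = (d*Nz)*Nz := by rw [hαz]; ring
      rw [e3]; exact e2
    calc |lam1 - d*α^2| ≤ |lam1 - d| + |d - d*α^2| := abs_sub_le lam1 d (d*α^2)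
      _ ≤ 2*(R*lam) + (2/3)*(R*lam) := add_le_add h1 e1
  have hUV : |sU*sW| ≤ qU*qW := by
    rw [abs_mul]; exact mul_le_mul h6 h7 (abs_nonneg _) hqU
  have hb1 : |(lam1 - d*α^2)*(sU*sW)| ≤ (2*(R*lam) + (2/3)*(R*lam))*(qU*qW) := by
    rw [abs_mul]; exact mul_le_mul key hUV (abs_nonneg _) (by positivity)
  have hdα : |d*α| ≤ d := by
    rw [abs_mul, abs_of_nonneg hd]; nlinarith
  have hb2 : |(d*α)*(sU*zW)| ≤ (4/3)*(R*lam)*(qU*qW) := by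
    calc |(d*α)*(sU*zW)| = |d*α| * |sU*zW| := abs_mul _ _
      _ ≤ d * (qU*(Nz*qW)) := by
          refine mul_le_mul hdα ?_ (abs_nonneg _) hd
          rw [abs_mul]; exact mul_le_mul h6 h9 (abs_nonneg _) hqU
      _ = (d*Nz)*(qU*qW) := by ring
      _ ≤ ((4/3)*(R*lam))*(qU*qW) := mul_le_mul_of_nonneg_right h2 (by positivity)
      _ = (4/3)*(R*lam)*(qU*qW) := by ring
  have hb3 : |(d*α)*(zU*sW)| ≤ (4/3)*(R*lam)*(qU*qW) := by
    calc |(d*α)*(zU*sW)| = |d*α| * |zU*sW| := abs_mul _ _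
      _ ≤ d * ((Nz*qU)*qW) := by
          refine mul_le_mul hdα ?_ (abs_nonneg _) hd
          rw [abs_mul]; exact mul_le_mul h8 h7 (abs_nonneg _) (by positivity)
      _ = (d*Nz)*(qU*qW) := by ring
      _ ≤ ((4/3)*(R*lam))*(qU*qW) := mul_le_mul_of_nonneg_right h2 (by positivity)
      _ = (4/3)*(R*lam)*(qU*qW) := by ring
  have hb4 : |d*(zU*zW)| ≤ (2/3)*(R*lam)*(qU*qW) := by
    calc |d*(zU*zW)| = |d| * |zU*zW| := abs_mul _ _
      _ ≤ d * ((Nz*qU)*(Nz*qW)) := by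
          refine mul_le_mul (le_of_eq (abs_of_nonneg hd)) ?_ (abs_nonneg _) hd
          rw [abs_mul]
          exact mul_le_mul h8 h9 (abs_nonneg _) (by positivity)
      _ = ((d*Nz)*Nz)*(qU*qW) := by ring
      _ ≤ ((2/3)*(R*lam))*(qU*qW) := mul_le_mul_of_nonneg_right e2 (by positivity)
      _ = (2/3)*(R*lam)*(qU*qW) := by ring
  have e : lam1*(sU*sW) - d*(α*sU+zU)*(α*sW+zW)
      = (lam1 - d*α^2)*(sU*sW) - ((d*α)*(sU*zW) + ((d*α)*(zU*sW) + d*(zU*zW))) := by ring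
  rw [e]
  have t1 := habs_sub ((lam1 - d*α^2)*(sU*sW)) ((d*α)*(sU*zW) + ((d*α)*(zU*sW) + d*(zU*zW)))
  have t2 := abs_add_le ((d*α)*(sU*zW)) ((d*α)*(zU*sW) + d*(zU*zW))
  have t3 := abs_add_le ((d*α)*(zU*sW)) (d*(zU*zW))
  linarith
set_option maxHeartbeats 1000000 in
/-- Irregular expander mixing lemma: if `Δ - δ ≤ Rλ` and `λ ≤ c·d` then for all `U, W`,
`|e(U,W) - (d/n)|U||W|| ≤ (10R+1) λ √(|U||W|)`. -/
theorem irregular_expander_mixing :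
    ∀ R : ℝ, 0 < R → ∃ c : ℝ, 0 < c ∧ ∃ n₀ : ℕ, ∀ n : ℕ, n₀ ≤ n →
    ∀ (G : SimpleGraph (Fin n)) (lam : ℝ), 0 < lam →
    (∃ i₀ : Fin n, (∀ i, adjEigs G i ≤ adjEigs G i₀) ∧ ∀ i, i ≠ i₀ → |adjEigs G i| ≤ lam) →
    (maxDeg G : ℝ) - (minDeg G : ℝ) ≤ R * lam →
    lam ≤ c * avgDeg G →
    ∀ U W : Set (Fin n),
      |(ePairs G U W : ℝ) - avgDeg G / n * U.ncard * W.ncard| ≤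
        (10 * R + 1) * lam * Real.sqrt ((U.ncard : ℝ) * W.ncard) := by
  intro R hR
  refine ⟨min (1/4) (1/(4*R)), lt_min (by norm_num) (by positivity), 1, ?_⟩
  intro n hn G lam hlam hex hΔδ hlc U W
  obtain ⟨i₀, htop, hoff⟩ := hex
  have hn0 : 0 < n := hn
  have hnR : (0:ℝ) < n := by exact_mod_cast hn0
  set d := avgDeg G with hd
  -- d is positive and dominates lam
  have hd0 : 0 < d := by
    by_contra h
    push_neg at h
    have : min (1/4) (1/(4*R)) * d ≤ 0 :=
      mul_nonpos_of_nonneg_of_nonpos (le_of_lt (lt_min (by norm_num) (by positivity))) h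
    linarith
  have h4lam : 4 * lam ≤ d := by
    have h1 : lam ≤ (1/4) * d := le_trans hlc (by
      have := min_le_left (1/4 : ℝ) (1/(4*R))
      nlinarith)
    linarith
  have h4Rlam : 4 * (R * lam) ≤ d := by
    have h1 : lam ≤ (1/(4*R)) * d := le_trans hlc (by
      have := min_le_right (1/4 : ℝ) (1/(4*R))
      nlinarith)
    have hR' : 0 < 4*R := by positivity
    rw [div_mul_eq_mul_div, le_div_iff₀ hR'] at h1
    nlinarith
  have hRl0 : 0 ≤ R * lam := by positivity
  -- degree deviation
  have hdev : ∀ v, |(degOf G v : ℝ) - d| ≤ R * lam := by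
    have hmin : ∀ v, (minDeg G : ℝ) ≤ (degOf G v : ℝ) := fun v => by
      have h : minDeg G ≤ degOf G v := Nat.sInf_le (Set.mem_range_self v)
      exact_mod_cast h
    have hmax : ∀ v, (degOf G v : ℝ) ≤ (maxDeg G : ℝ) := fun v => by
      have h : degOf G v ≤ maxDeg G := le_csSup (Set.finite_range _).bddAbove (Set.mem_range_self v)
      exact_mod_cast h
    have hdlb : (minDeg G : ℝ) ≤ d := by
      rw [hd, avgDeg, le_div_iff₀ hnR]
      calc (minDeg G : ℝ) * n = ∑ _v : Fin n, (minDeg G : ℝ) := by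
            rw [Finset.sum_const, Finset.card_univ, Fintype.card_fin, nsmul_eq_mul]; ring
        _ ≤ ∑ v : Fin n, (degOf G v : ℝ) := Finset.sum_le_sum fun v _ => hmin v
    have hdub : d ≤ (maxDeg G : ℝ) := by
      rw [hd, avgDeg, div_le_iff₀ hnR]
      calc ∑ v : Fin n, (degOf G v : ℝ) ≤ ∑ _v : Fin n, (maxDeg G : ℝ) :=
            Finset.sum_le_sum fun v _ => hmax v
        _ = (maxDeg G : ℝ) * n := by
            rw [Finset.sum_const, Finset.card_univ, Fintype.card_fin, nsmul_eq_mul]; ring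
    intro v
    rw [abs_le]
    constructor
    · have h1 := hmin v; have h2 := hdub; linarith
    · have h1 := hmax v; have h2 := hdlb; linarith
  -- spectral framework
  have hA := adjMat_isHermitian G
  set b := hA.eigenvectorBasis with hb
  set S := Matrix.toEuclideanLin (adjMat G) with hSdef
  have hsym : ∀ x y : EuclideanSpace ℝ (Fin n), ⟪S x, y⟫ = ⟪x, S y⟫ :=
    (Matrix.isHermitian_iff_isSymmetric.mp hA)
  have heig : ∀ j, S (b j) = adjEigs G j • b j := by
    intro j
    apply (WithLp.equiv 2 (Fin n → ℝ)).injective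
    simpa [hSdef, hb, adjEigs, Matrix.toEuclideanLin_apply] using hA.mulVec_eigenvectorBasis j
  have hrepr : ∀ (x : EuclideanSpace ℝ (Fin n)) i, b.repr x i = ⟪b i, x⟫ :=
    fun x i => b.repr_apply_apply x i
  have hSrepr : ∀ (x : EuclideanSpace ℝ (Fin n)) i, b.repr (S x) i = adjEigs G i * b.repr x i := by
    intro x i
    rw [hrepr, hrepr, ← hsym, heig, real_inner_smul_left]
  have hinner : ∀ x y : EuclideanSpace ℝ (Fin n), ⟪x, y⟫ = ∑ i, b.repr x i * b.repr y i := by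
    intro x y
    rw [← b.sum_inner_mul_inner x y]
    exact Finset.sum_congr rfl fun i _ => by rw [hrepr, hrepr, real_inner_comm x (b i)]
  have hq : ∀ x y : EuclideanSpace ℝ (Fin n),
      ⟪x, S y⟫ = ∑ i, adjEigs G i * (b.repr x i * b.repr y i) := by
    intro x y
    rw [hinner]
    exact Finset.sum_congr rfl fun i _ => by rw [hSrepr]; ring
  set lam1 := adjEigs G i₀ with hlam1
  -- vectors
  set χU := chiVec U with hχU
  set χW := chiVec W with hχW
  set sn := Real.sqrt n with hsn
  have hsn0 : 0 < sn := Real.sqrt_pos.mpr hnR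
  have hsn2 : sn * sn = (n : ℝ) := Real.mul_self_sqrt (le_of_lt hnR)
  set uvec : EuclideanSpace ℝ (Fin n) := WithLp.toLp 2 (fun _ => sn⁻¹ : Fin n → ℝ) with huvec
  have hdot : ∀ x y : EuclideanSpace ℝ (Fin n), ⟪x, y⟫ = ∑ i, x i * y i := by
    intro x y
    simp [PiLp.inner_apply, RCLike.inner_apply, mul_comm]
  have hu_norm : ⟪uvec, uvec⟫ = 1 := by
    rw [hdot]
    simp only [huvec, PiLp.toLp_apply]
    rw [Finset.sum_const, Finset.card_univ, Fintype.card_fin, nsmul_eq_mul]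
    rw [← hsn2]
    field_simp
  -- the deviation vector w'
  set w' : EuclideanSpace ℝ (Fin n) := S uvec - d • uvec with hw'
  have hSapp : ∀ (x : EuclideanSpace ℝ (Fin n)) (j : Fin n), S x j = ∑ k, adjMat G j k * x k :=
    fun x j => rfl
  have hw'app : ∀ j, w' j = ((degOf G j : ℝ) - d) * sn⁻¹ := by
    intro j
    have h1 : w' j = S uvec j - d * uvec j := rfl
    rw [h1, hSapp]
    simp only [huvec, PiLp.toLp_apply]
    rw [← Finset.sum_mul, adjMat_row_sum]
    ring
  have hw'_normsq : ⟪w', w'⟫ ≤ (R * lam) ^ 2 := by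
    rw [hdot]
    have hterm : ∀ j, w' j * w' j ≤ (R*lam)^2 / n := by
      intro j
      have hx : ((degOf G j : ℝ) - d) * ((degOf G j : ℝ) - d) ≤ (R*lam)^2 := by
        nlinarith [hdev j, abs_nonneg ((degOf G j : ℝ) - d), sq_abs ((degOf G j : ℝ) - d)]
      calc w' j * w' j
          = (((degOf G j : ℝ) - d) * ((degOf G j : ℝ) - d)) * (sn*sn)⁻¹ := by
            rw [hw'app]; rw [mul_inv]; ring
        _ ≤ (R*lam)^2 * (sn*sn)⁻¹ := by
            apply mul_le_mul_of_nonneg_right hx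
            positivity
        _ = (R*lam)^2 / n := by rw [hsn2]; ring
    calc ∑ j, w' j * w' j ≤ ∑ _j : Fin n, (R*lam)^2/n :=
          Finset.sum_le_sum fun j _ => hterm j
      _ = n * ((R*lam)^2/n) := by
          rw [Finset.sum_const, Finset.card_univ, Fintype.card_fin, nsmul_eq_mul]
      _ = (R*lam)^2 := by field_simp
  -- α and z
  set α := b.repr uvec i₀ with hα
  set z := uvec - α • b i₀ with hz
  have hbone : ⟪b i₀, b i₀⟫ = 1 := by
    rw [real_inner_self_eq_norm_sq, b.orthonormal.1 i₀]; norm_num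
  have hbrepr_self : ∀ i, b.repr (b i₀) i = if i = i₀ then 1 else 0 := by
    intro i
    rw [b.repr_self i₀]
    by_cases h : i = i₀ <;> simp [EuclideanSpace.single, h]
  have hz_repr : ∀ i, b.repr z i = b.repr uvec i - α * (if i = i₀ then 1 else 0) := by
    intro i
    rw [hz, map_sub, _root_.map_smul]
    rw [PiLp.sub_apply, PiLp.smul_apply, hbrepr_self]
    rfl
  have hz_repr0 : b.repr z i₀ = 0 := by rw [hz_repr]; simp [hα]
  have hz_normsq : ⟪z, z⟫ = 1 - α ^ 2 := by
    rw [hz, real_inner_sub_sub_self]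
    rw [real_inner_smul_right, real_inner_smul_left, real_inner_smul_right, hbone]
    have hbu : ⟪uvec, b i₀⟫ = α := by rw [real_inner_comm, ← hrepr]
    rw [hbu, hu_norm]
    ring
  have hz_nonneg : (0:ℝ) ≤ ⟪z, z⟫ := real_inner_self_nonneg
  -- the key eigen-equation manipulation
  have hSz_eq : S z - d • z = w' - (α * (lam1 - d)) • b i₀ := by
    rw [hz, hw', map_sub, _root_.map_smul, heig i₀]
    rw [hlam1]
    module
  have hreprw : ∀ i, b.repr w' i = adjEigs G i * b.repr uvec i - d * b.repr uvec i := by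
    intro i
    rw [hw', map_sub, _root_.map_smul, PiLp.sub_apply, PiLp.smul_apply, hSrepr]
    rfl
  have halph : |α * (lam1 - d)| ≤ R * lam := by
    have h1 : b.repr w' i₀ = α * (lam1 - d) := by
      rw [hreprw i₀, ← hα, ← hlam1]; ring
    have h2 : (b.repr w' i₀) * (b.repr w' i₀) ≤ ⟪w', w'⟫ := by
      rw [hinner w' w']
      exact Finset.single_le_sum (f := fun i => b.repr w' i * b.repr w' i)
        (fun i _ => mul_self_nonneg _) (Finset.mem_univ i₀)
    apply abs_le_of_sq_le' hRl0
    calc (α * (lam1 - d))^2 = (b.repr w' i₀) * (b.repr w' i₀) := by rw [h1]; ring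
      _ ≤ ⟪w', w'⟫ := h2
      _ ≤ (R*lam)^2 := hw'_normsq
  have hrepr_Szdz : ∀ i, b.repr (S z - d • z) i = adjEigs G i * b.repr z i - d * b.repr z i := by
    intro i
    rw [map_sub, _root_.map_smul, PiLp.sub_apply, PiLp.smul_apply, hSrepr]
    rfl
  have hSzdz_normsq : ⟪S z - d • z, S z - d • z⟫ ≤ (R * lam) ^ 2 := by
    have hper : ∀ i, b.repr (S z - d • z) i * b.repr (S z - d • z) i
        ≤ b.repr w' i * b.repr w' i := by
      intro i
      by_cases hi : i = i₀
      · subst hi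
        rw [hrepr_Szdz, hz_repr0]
        simp [mul_self_nonneg]
      · have : b.repr (S z - d • z) i = b.repr w' i := by
          rw [hSz_eq, map_sub, _root_.map_smul, PiLp.sub_apply, PiLp.smul_apply, hbrepr_self]
          simp [hi]
        rw [this]
    calc ⟪S z - d • z, S z - d • z⟫
        = ∑ i, b.repr (S z - d • z) i * b.repr (S z - d • z) i := hinner _ _
      _ ≤ ∑ i, b.repr w' i * b.repr w' i := Finset.sum_le_sum fun i _ => hper i
      _ = ⟪w', w'⟫ := (hinner w' w').symm
      _ ≤ (R*lam)^2 := hw'_normsq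
  -- norms
  have hz_norm2 : ‖z‖ ^ 2 = 1 - α ^ 2 := by
    rw [← real_inner_self_eq_norm_sq]; exact hz_normsq
  have hSz_le : ‖S z‖ ≤ lam * ‖z‖ := by
    have h1 : ⟪S z, S z⟫ ≤ lam^2 * ⟪z, z⟫ := by
      rw [hinner (S z) (S z), hinner z z, Finset.mul_sum]
      apply Finset.sum_le_sum
      intro i _
      rw [hSrepr]
      by_cases hi : i = i₀
      · subst hi
        rw [hz_repr0]
        simp only [mul_zero, zero_mul]
        norm_num
      · exact arith_sq (hoff i hi)
    have h2 : ‖S z‖^2 ≤ (lam * ‖z‖)^2 := by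
      rw [← real_inner_self_eq_norm_sq]
      calc ⟪S z, S z⟫ ≤ lam^2 * ⟪z, z⟫ := h1
        _ = (lam * ‖z‖)^2 := by rw [real_inner_self_eq_norm_sq]; ring
    have := abs_le_of_sq_le' (by positivity : (0:ℝ) ≤ lam * ‖z‖) h2
    rwa [abs_of_nonneg (norm_nonneg _)] at this
  have hkey : (d - lam) * ‖z‖ ≤ R * lam := by
    have t1 : ‖S z - d • z‖ ≤ R*lam := by
      have h2 : ‖S z - d • z‖^2 ≤ (R*lam)^2 := by
        rw [← real_inner_self_eq_norm_sq]; exact hSzdz_normsq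
      have := abs_le_of_sq_le' hRl0 h2
      rwa [abs_of_nonneg (norm_nonneg _)] at this
    have t2 : ‖d • z‖ - ‖S z‖ ≤ ‖d • z - S z‖ := norm_sub_norm_le _ _
    have t3 : ‖d • z - S z‖ = ‖S z - d • z‖ := norm_sub_rev _ _
    have t4 : ‖d • z‖ = d * ‖z‖ := by
      rw [norm_smul, Real.norm_eq_abs, abs_of_pos hd0]
    have t5 : (d - lam) * ‖z‖ = d * ‖z‖ - lam * ‖z‖ := by ring
    linarith
  have hzn : (0:ℝ) ≤ ‖z‖ := norm_nonneg z
  have hαz : α^2 = 1 - ‖z‖^2 := by linarith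
  have hdz : d * ‖z‖ ≤ (4/3) * (R * lam) := arith_dz h4lam hzn hkey
  have hz_half : ‖z‖ ≤ 1/2 := arith_zhalf hdz h4Rlam hd0 hzn
  have hα_half : 1/2 ≤ |α| := arith_alpha hz_half hzn hαz
  have hlam1d : |lam1 - d| ≤ 2 * (R * lam) := arith_lam1d halph hα_half
  -- counting quantities
  set sU := b.repr χU i₀ with hsU
  set sW := b.repr χW i₀ with hsW
  set qU := Real.sqrt (U.ncard) with hqU
  set qW := Real.sqrt (W.ncard) with hqW
  have hqU0 : 0 ≤ qU := Real.sqrt_nonneg _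
  have hqW0 : 0 ≤ qW := Real.sqrt_nonneg _
  have hqU2 : qU * qU = (U.ncard : ℝ) := Real.mul_self_sqrt (by positivity)
  have hqW2 : qW * qW = (W.ncard : ℝ) := Real.mul_self_sqrt (by positivity)
  have hUin : ⟪χU, χU⟫ = (U.ncard : ℝ) := by rw [hdot, hχU]; exact chiVec_dot U
  have hWin : ⟪χW, χW⟫ = (W.ncard : ℝ) := by rw [hdot, hχW]; exact chiVec_dot W
  have hUnorm : ‖χU‖ = qU := by
    have : ‖χU‖^2 = qU^2 := by
      rw [← real_inner_self_eq_norm_sq, hUin, sq, hqU2]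
    have h2 := abs_le_of_sq_le' hqU0 (le_of_eq this)
    have h3 := abs_le_of_sq_le' (norm_nonneg χU) (le_of_eq this.symm)
    rw [abs_of_nonneg (norm_nonneg _)] at h2
    rw [abs_of_nonneg hqU0] at h3
    linarith
  have hWnorm : ‖χW‖ = qW := by
    have : ‖χW‖^2 = qW^2 := by
      rw [← real_inner_self_eq_norm_sq, hWin, sq, hqW2]
    have h2 := abs_le_of_sq_le' hqW0 (le_of_eq this)
    have h3 := abs_le_of_sq_le' (norm_nonneg χW) (le_of_eq this.symm)
    rw [abs_of_nonneg (norm_nonneg _)] at h2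
    rw [abs_of_nonneg hqW0] at h3
    linarith
  have hsum_sqU : ∑ i, b.repr χU i * b.repr χU i = (U.ncard : ℝ) := by
    rw [← hinner χU χU]; exact hUin
  have hsum_sqW : ∑ i, b.repr χW i * b.repr χW i = (W.ncard : ℝ) := by
    rw [← hinner χW χW]; exact hWin
  have hsU_bound : |sU| ≤ qU := by
    apply abs_le_of_sq_le' hqU0
    have h2 : sU * sU ≤ ∑ i, b.repr χU i * b.repr χU i :=
      Finset.single_le_sum (f := fun i => b.repr χU i * b.repr χU i)
        (fun i _ => mul_self_nonneg _) (Finset.mem_univ i₀)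
    rw [hsum_sqU] at h2
    calc sU^2 = sU * sU := sq sU ▸ rfl
      _ ≤ (U.ncard : ℝ) := h2
      _ = qU^2 := by rw [sq, hqU2]
  have hsW_bound : |sW| ≤ qW := by
    apply abs_le_of_sq_le' hqW0
    have h2 : sW * sW ≤ ∑ i, b.repr χW i * b.repr χW i :=
      Finset.single_le_sum (f := fun i => b.repr χW i * b.repr χW i)
        (fun i _ => mul_self_nonneg _) (Finset.mem_univ i₀)
    rw [hsum_sqW] at h2
    calc sW^2 = sW * sW := sq sW ▸ rfl
      _ ≤ (W.ncard : ℝ) := h2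
      _ = qW^2 := by rw [sq, hqW2]
  set tU := ⟪uvec, χU⟫ with htUdef
  set tW := ⟪uvec, χW⟫ with htWdef
  have htU_eq : tU = (U.ncard : ℝ) * sn⁻¹ := by
    rw [htUdef, hdot]
    simp only [huvec, PiLp.toLp_apply]
    rw [← Finset.mul_sum, hχU, chiVec_sum, mul_comm]
  have htW_eq : tW = (W.ncard : ℝ) * sn⁻¹ := by
    rw [htWdef, hdot]
    simp only [huvec, PiLp.toLp_apply]
    rw [← Finset.mul_sum, hχW, chiVec_sum, mul_comm]
  set zU := ⟪z, χU⟫ with hzUdef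
  set zW := ⟪z, χW⟫ with hzWdef
  have hzU_bound : |zU| ≤ ‖z‖ * qU := by
    rw [hzUdef, ← hUnorm]; exact abs_real_inner_le_norm z χU
  have hzW_bound : |zW| ≤ ‖z‖ * qW := by
    rw [hzWdef, ← hWnorm]; exact abs_real_inner_le_norm z χW
  have huvec_dec : uvec = α • b i₀ + z := by rw [hz]; module
  have htU_dec : tU = α * sU + zU := by
    rw [htUdef, huvec_dec, inner_add_left, real_inner_smul_left, ← hrepr, ← hsU, ← hzUdef]
  have htW_dec : tW = α * sW + zW := by
    rw [htWdef, huvec_dec, inner_add_left, real_inner_smul_left, ← hrepr, ← hsW, ← hzWdef]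
  -- main identity
  have hmain : (ePairs G U W : ℝ) = ⟪χU, S χW⟫ := by
    rw [ePairs_eq_sum G U W, hdot χU (S χW)]
    refine Finset.sum_congr rfl fun u _ => ?_
    rw [hSapp, Finset.mul_sum]
  have htarget : d / n * U.ncard * W.ncard = d * tU * tW := by
    rw [htU_eq, htW_eq, ← hsn2]
    field_simp
  -- step 1 : spectral gap bound
  have hstep1 : |⟪χU, S χW⟫ - lam1 * (sU * sW)| ≤ lam * (qU * qW) := by
    rw [hq χU χW]
    have hsplit : ∑ i, adjEigs G i * (b.repr χU i * b.repr χW i)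
        = lam1 * (sU * sW) + ∑ i ∈ Finset.univ.erase i₀,
            adjEigs G i * (b.repr χU i * b.repr χW i) := by
      rw [← Finset.add_sum_erase _ _ (Finset.mem_univ i₀)]
    rw [hsplit]
    rw [add_sub_cancel_left]
    have hCS : ∑ i, |b.repr χU i| * |b.repr χW i| ≤ qU * qW := by
      have hnn : 0 ≤ ∑ i, |b.repr χU i| * |b.repr χW i| :=
        Finset.sum_nonneg fun i _ => mul_nonneg (abs_nonneg _) (abs_nonneg _)
      have hsq : (∑ i, |b.repr χU i| * |b.repr χW i|)^2 ≤ (qU * qW)^2 := by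
        calc (∑ i, |b.repr χU i| * |b.repr χW i|)^2
            ≤ (∑ i, |b.repr χU i|^2) * ∑ i, |b.repr χW i|^2 :=
              Finset.sum_mul_sq_le_sq_mul_sq _ _ _
          _ = (U.ncard : ℝ) * (W.ncard : ℝ) := by
              rw [← hsum_sqU, ← hsum_sqW]
              congr 1 <;> exact Finset.sum_congr rfl fun i _ => by rw [sq_abs, sq]
          _ = (qU * qW)^2 := by rw [mul_pow, sq, sq, hqU2, hqW2]
      have habs := abs_le_of_sq_le' (by positivity) hsq
      rwa [abs_of_nonneg hnn] at habs
    calc |∑ i ∈ Finset.univ.erase i₀, adjEigs G i * (b.repr χU i * b.repr χW i)|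
        ≤ ∑ i ∈ Finset.univ.erase i₀, |adjEigs G i * (b.repr χU i * b.repr χW i)| :=
          Finset.abs_sum_le_sum_abs _ _
      _ ≤ ∑ i ∈ Finset.univ.erase i₀, lam * (|b.repr χU i| * |b.repr χW i|) := by
          apply Finset.sum_le_sum
          intro i hi
          rw [abs_mul, abs_mul]
          exact mul_le_mul (hoff i (Finset.ne_of_mem_erase hi)) le_rfl
            (by positivity) (le_of_lt hlam)
      _ ≤ ∑ i, lam * (|b.repr χU i| * |b.repr χW i|) := by
          apply Finset.sum_le_sum_of_subset_of_nonneg (Finset.erase_subset _ _)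
          intro i _ _
          positivity
      _ = lam * ∑ i, |b.repr χU i| * |b.repr χW i| := by rw [Finset.mul_sum]
      _ ≤ lam * (qU * qW) := by
          apply mul_le_mul_of_nonneg_left hCS (le_of_lt hlam)
  -- step 2 : main-eigenvalue bound
  have hstep2 : |lam1 * (sU * sW) - d * tU * tW| ≤ 6 * R * lam * (qU * qW) := by
    have h := step2arith (R := R) (lam := lam) (d := d) (lam1 := lam1) (α := α)
      (Nz := ‖z‖) (sU := sU) (sW := sW) (zU := zU) (zW := zW) (qU := qU) (qW := qW)
      hRl0 (le_of_lt hd0) hlam1d hdz hz_half hzn hαz hsU_bound hsW_bound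
      hzU_bound hzW_bound hqU0 hqW0
    have he : d * tU * tW = d * (α*sU+zU) * (α*sW+zW) := by rw [htU_dec, htW_dec]
    rw [he]
    calc |lam1 * (sU * sW) - d * (α*sU+zU) * (α*sW+zW)|
        = |lam1 * (sU*sW) - d*(α*sU+zU)*(α*sW+zW)| := by ring_nf
      _ ≤ 6*R*lam*(qU*qW) := h
      _ = 6 * R * lam * (qU * qW) := by ring
  -- assemble
  have hsqrt : Real.sqrt ((U.ncard : ℝ) * W.ncard) = qU * qW := by
    rw [hqU, hqW, ← Real.sqrt_mul (by positivity)]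
  rw [hsqrt, hmain, htarget]
  have htri : |⟪χU, S χW⟫ - d * tU * tW| ≤ lam * (qU * qW) + 6 * R * lam * (qU * qW) := by
    calc |⟪χU, S χW⟫ - d * tU * tW|
        = |(⟪χU, S χW⟫ - lam1 * (sU * sW)) + (lam1 * (sU * sW) - d * tU * tW)| := by ring_nf
      _ ≤ |⟪χU, S χW⟫ - lam1 * (sU * sW)| + |lam1 * (sU * sW) - d * tU * tW| := abs_add_le _ _
      _ ≤ lam * (qU * qW) + 6 * R * lam * (qU * qW) := add_le_add hstep1 hstep2
  have hqq : 0 ≤ qU * qW := mul_nonneg hqU0 hqW0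
  have hfinal : lam * (qU * qW) + 6 * R * lam * (qU * qW) ≤ (10 * R + 1) * lam * (qU * qW) := by
    have h1 : (6*R + 1) * lam ≤ (10*R + 1) * lam :=
      mul_le_mul_of_nonneg_right (by linarith) (le_of_lt hlam)
    have h2 : ((6*R + 1) * lam) * (qU*qW) ≤ ((10*R + 1) * lam) * (qU*qW) :=
      mul_le_mul_of_nonneg_right h1 hqq
    calc lam * (qU * qW) + 6 * R * lam * (qU * qW) = ((6*R + 1) * lam) * (qU*qW) := by ring
      _ ≤ ((10*R + 1) * lam) * (qU*qW) := h2
      _ = (10 * R + 1) * lam * (qU * qW) := by ring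
  linarith
end

section
/- There exists c > 0 such that the following holds. Let G be a graph on n vertices with average degree d, minimum degree δ, and maximum degree Δ, and suppose λ̄ > 0 is such that for all vertex subsets U, W we have |e(U,W) − (d/n)·|U|·|W|| ≤ λ̄·√(|U|·|W|), that Δ − δ ≤ λ̄, and that λ̄ ≤ c·d. Then every vertex subset U with 1 ≤ |U| ≤ 2λ̄²n/d² satisfies |N(U)| > ((d − 2λ̄)²/(5λ̄²))·|U|, where N(U) is the set of vertices outside U having a neighbor in U. -/
open SimpleGraph

/-- The external neighborhood of `U`: vertices outside `U` with a neighbor in `U`. -/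
def extNbhd {n : ℕ} (G : SimpleGraph (Fin n)) (U : Set (Fin n)) : Set (Fin n) :=
  {v | v ∉ U ∧ ∃ u ∈ U, G.Adj u v}

open Classical in
lemma ePairs_eq_sum_degree {n : ℕ} (G : SimpleGraph (Fin n)) (U : Set (Fin n)) :
    ePairs G U Set.univ = ∑ x ∈ U.toFinset, G.degree x := by
  classical
  have hset : {p : Fin n × Fin n | p.1 ∈ U ∧ p.2 ∈ Set.univ ∧ G.Adj p.1 p.2}
      = ↑(U.toFinset.biUnion fun x => {x} ×ˢ G.neighborFinset x) := by
    ext ⟨a, b⟩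
    simp only [Set.mem_setOf_eq, Set.mem_univ, true_and, Finset.coe_biUnion, Set.mem_iUnion,
      Finset.mem_coe, Finset.mem_product, Finset.mem_singleton, mem_neighborFinset,
      Set.mem_toFinset]
    constructor
    · rintro ⟨ha, hadj⟩; exact ⟨a, ha, rfl, hadj⟩
    · rintro ⟨x, hx, rfl, hadj⟩; exact ⟨hx, hadj⟩
  rw [ePairs, hset, Set.ncard_coe_finset, Finset.card_biUnion]
  · refine Finset.sum_congr rfl fun x _ => ?_
    rw [Finset.card_product, Finset.card_singleton, one_mul, SimpleGraph.degree]
  · intro x _ y _ hxy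
    rw [Function.onFun, Finset.disjoint_left]
    rintro ⟨a, b⟩ h1 h2
    simp only [Finset.mem_product, Finset.mem_singleton] at h1 h2
    exact hxy (h1.1.symm.trans h2.1)

open Classical in
lemma degOf_eq {n : ℕ} (G : SimpleGraph (Fin n)) (v : Fin n) :
    degOf G v = G.degree v := by
  classical
  rw [degOf, SimpleGraph.degree, SimpleGraph.neighborFinset_def]
  exact Set.ncard_eq_toFinset_card' _


set_option maxHeartbeats 1000000 in
/-- Vertex expansion of small sets: if the edge distribution is controlled by `λ̄`,
`Δ - δ ≤ λ̄` and `λ̄ ≤ c d`, then every `U` with `1 ≤ |U| ≤ 2λ̄²n/d²` satisfies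
`|N(U)| > ((d - 2λ̄)²/(5λ̄²)) |U|`. -/
theorem small_set_expansion :
    ∃ c : ℝ, 0 < c ∧
    ∀ (n : ℕ) (G : SimpleGraph (Fin n)) (lamb : ℝ), 0 < lamb →
    (∀ U W : Set (Fin n),
      |(ePairs G U W : ℝ) - avgDeg G / n * U.ncard * W.ncard| ≤
        lamb * Real.sqrt ((U.ncard : ℝ) * W.ncard)) →
    (maxDeg G : ℝ) - (minDeg G : ℝ) ≤ lamb →
    lamb ≤ c * avgDeg G →
    ∀ U : Set (Fin n), 1 ≤ U.ncard → (U.ncard : ℝ) ≤ 2 * lamb ^ 2 * n / (avgDeg G) ^ 2 →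
      ((extNbhd G U).ncard : ℝ) > (avgDeg G - 2 * lamb) ^ 2 / (5 * lamb ^ 2) * U.ncard := by
  classical
  refine ⟨1/100, by norm_num, ?_⟩
  intro n G L hL hmix hdeg hLc U hU1 hU2
  by_contra hcon
  push_neg at hcon
  set D := avgDeg G with hDdef
  have hLD : L ≤ D / 100 := by linarith
  have hD0 : 0 < D := by linarith
  have hUne : U.Nonempty := Set.nonempty_of_ncard_ne_zero (by omega)
  obtain ⟨v0, hv0⟩ := hUne
  have hn : 0 < n := v0.pos
  have hnR : (0:ℝ) < n := by exact_mod_cast hn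
  -- degree bounds
  have hmaxv : ∀ v : Fin n, degOf G v ≤ maxDeg G := fun v =>
    le_csSup (Set.Finite.bddAbove (Set.finite_range _)) ⟨v, rfl⟩
  have hminv : ∀ v : Fin n, minDeg G ≤ degOf G v := fun v => Nat.sInf_le ⟨v, rfl⟩
  have hDmax : D ≤ (maxDeg G : ℝ) := by
    rw [hDdef, avgDeg, div_le_iff₀ hnR]
    calc ∑ v : Fin n, (degOf G v : ℝ) ≤ ∑ _v : Fin n, (maxDeg G : ℝ) :=
          Finset.sum_le_sum fun v _ => by exact_mod_cast hmaxv v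
      _ = (maxDeg G : ℝ) * n := by simp [mul_comm]
  have hminD : D - L ≤ (minDeg G : ℝ) := by linarith
  set S := U ∪ extNbhd G U with hSdef
  set u := (U.ncard : ℝ) with hudef
  set w := ((extNbhd G U).ncard : ℝ) with hwdef
  set s := (S.ncard : ℝ) with hsdef
  have hu1 : (1:ℝ) ≤ u := by rw [hudef]; exact_mod_cast hU1
  have hu0 : (0:ℝ) ≤ u := by linarith
  have hw0 : (0:ℝ) ≤ w := by rw [hwdef]; positivity
  have hs0 : (0:ℝ) ≤ s := by rw [hsdef]; positivity
  have hsu : s ≤ u + w := by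
    rw [hsdef, hudef, hwdef]
    exact_mod_cast Set.ncard_union_le U (extNbhd G U)
  -- lower bound on ePairs G U S
  have hcard : U.toFinset.card = U.ncard := (Set.ncard_eq_toFinset_card' U).symm
  have hsum : minDeg G * U.ncard ≤ ePairs G U Set.univ := by
    rw [ePairs_eq_sum_degree]
    calc minDeg G * U.ncard = ∑ _x ∈ U.toFinset, minDeg G := by
          rw [Finset.sum_const, smul_eq_mul, hcard, mul_comm]
      _ ≤ ∑ x ∈ U.toFinset, G.degree x :=
          Finset.sum_le_sum fun x _ => by rw [← degOf_eq]; exact hminv x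
  have hEeq : ePairs G U Set.univ = ePairs G U S := by
    rw [ePairs, ePairs]
    congr 1
    ext ⟨a, b⟩
    simp only [Set.mem_setOf_eq, Set.mem_univ, true_and, hSdef, Set.mem_union]
    constructor
    · rintro ⟨ha, hadj⟩
      refine ⟨ha, ?_, hadj⟩
      by_cases hb : b ∈ U
      · exact Or.inl hb
      · exact Or.inr ⟨hb, a, ha, hadj⟩
    · rintro ⟨ha, _, hadj⟩; exact ⟨ha, hadj⟩
  have hlow : (D - L) * u ≤ (ePairs G U S : ℝ) := by
    have h1 : ((minDeg G : ℝ)) * u ≤ (ePairs G U S : ℝ) := by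
      rw [← hEeq, hudef]
      exact_mod_cast hsum
    nlinarith [mul_le_mul_of_nonneg_right hminD hu0]
  have hup : (ePairs G U S : ℝ) ≤ D / n * u * s + L * Real.sqrt (u * s) := by
    have h := (abs_le.mp (hmix U S)).2
    rw [← hudef, ← hsdef] at h
    linarith
  -- clear denominators
  have h1 : u * D ^ 2 ≤ 2 * L ^ 2 * n := by
    rw [le_div_iff₀ (by positivity)] at hU2
    linarith
  have h2 : w * (5 * L ^ 2) ≤ (D - 2 * L) ^ 2 * u := by
    rw [div_mul_eq_mul_div, le_div_iff₀ (by positivity)] at hcon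
    linarith
  have hsl : 5 * L ^ 2 * s ≤ 5 * L ^ 2 * u + (D - 2 * L) ^ 2 * u := by nlinarith
  -- sqrt term bound
  have hsqrt : L * Real.sqrt (u * s) ≤ (L + 46/100 * D) * u := by
    have hcoef : 5 * L ^ 2 + (D - 2 * L) ^ 2 ≤ 5 * (L + 46/100 * D) ^ 2 := by
      nlinarith [mul_nonneg hL.le hD0.le, mul_le_mul_of_nonneg_left hLD hL.le]
    have h3 : 5 * L ^ 2 * s * u ≤ (5 * L ^ 2 + (D - 2 * L) ^ 2) * u * u := by
      nlinarith [mul_le_mul_of_nonneg_right hsl hu0]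
    have key : L ^ 2 * (u * s) ≤ ((L + 46/100 * D) * u) ^ 2 := by
      nlinarith [mul_le_mul_of_nonneg_right hcoef (mul_nonneg hu0 hu0)]
    calc L * Real.sqrt (u * s) = Real.sqrt (L ^ 2 * (u * s)) := by
          rw [Real.sqrt_mul (sq_nonneg L), Real.sqrt_sq hL.le]
      _ ≤ Real.sqrt (((L + 46/100 * D) * u) ^ 2) := Real.sqrt_le_sqrt key
      _ = (L + 46/100 * D) * u := Real.sqrt_sq (by positivity)
  -- main term bound
  have hDn : D / n * u * s ≤ (2/10000 * D + 2/5 * D) * u := by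
    rw [div_mul_eq_mul_div, div_mul_eq_mul_div, div_le_iff₀ hnR]
    have key2 : 2 * (5 * L ^ 2 + (D - 2 * L) ^ 2) ≤ 5 * (2/10000 * D + 2/5 * D) * D := by
      nlinarith [mul_le_mul_of_nonneg_left hLD hL.le, mul_nonneg hL.le hD0.le]
    have h8 : 5 * L ^ 2 * D * (D * u * s) ≤
        5 * L ^ 2 * D * ((2/10000 * D + 2/5 * D) * u * n) := by
      nlinarith [mul_le_mul_of_nonneg_left hsl
          (mul_nonneg (mul_nonneg hD0.le hD0.le) hu0),
        mul_le_mul_of_nonneg_right h1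
          (mul_nonneg (by positivity : (0:ℝ) ≤ 5 * L ^ 2 + (D - 2 * L) ^ 2) hu0),
        mul_le_mul_of_nonneg_right key2
          (mul_nonneg (mul_nonneg (sq_nonneg L) hnR.le) hu0)]
    exact le_of_mul_le_mul_left h8 (by positivity)
  -- contradiction
  have hfin : (D - L) * u ≤ (2/10000 * D + 2/5 * D) * u + (L + 46/100 * D) * u := by
    linarith
  nlinarith [hfin, hu1, hD0, hLD,
    mul_le_mul_of_nonneg_right
      (show (1198/10000) * D ≤ D - L - (2/10000 * D + 2/5 * D) - (L + 46/100 * D) by linarith)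
      hu0,
    mul_le_mul_of_nonneg_left hu1 (by linarith : (0:ℝ) ≤ 1198/10000 * D)]
end

section
/- There exist c > 0, K > 0 and n₀ such that the following holds. Let G be a graph on n ≥ n₀ vertices with average degree d, minimum degree δ, maximum degree Δ, adjacency matrix A, and suppose λ̄ > 0 is such that for all vertex subsets U, W we have |e(U,W) − (d/n)·|U|·|W|| ≤ λ̄·√(|U|·|W|), that Δ − δ ≤ λ̄, and that d ≥ K·λ̄·(log n)². Then δ − 9λ̄ > 0 and the matrix (1/(δ − 9λ̄))·A is doubly superstochastic: there exists a doubly stochastic n×n matrix S with Sᵢⱼ ≤ Aᵢⱼ/(δ − 9λ̄) for all i, j. Equivalently, for all subsets I, J of the vertex set, e(I,J) ≥ (δ − 9λ̄)·(|I| + |J| − n). -/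
open SimpleGraph

open Classical Finset

lemma ePairs_eq_card {n : ℕ} (G : SimpleGraph (Fin n)) (U W : Set (Fin n)) :
    ePairs G U W = ((U.toFinite.toFinset ×ˢ W.toFinite.toFinset).filter
      (fun p => G.Adj p.1 p.2)).card := by
  rw [ePairs, ← Set.ncard_coe_finset]
  congr 1
  ext p
  simp [Set.Finite.mem_toFinset, and_assoc, Set.mem_setOf_eq]

lemma ePairs_eq_sum_s13 {n : ℕ} (G : SimpleGraph (Fin n)) (U W : Set (Fin n)) :
    (ePairs G U W : ℝ) = ∑ i ∈ U.toFinite.toFinset, ∑ j ∈ W.toFinite.toFinset,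
      (if G.Adj i j then (1:ℝ) else 0) := by
  rw [ePairs_eq_card, Finset.card_filter, Finset.sum_product]
  push_cast
  rfl

lemma degOf_eq_sum {n : ℕ} (G : SimpleGraph (Fin n)) (v : Fin n) :
    (degOf G v : ℝ) = ∑ j, (if G.Adj v j then (1:ℝ) else 0) := by
  rw [degOf, show G.neighborSet v = ↑(Finset.univ.filter (fun j => G.Adj v j)) by ext; simp,
    Set.ncard_coe_finset, Finset.card_filter]
  push_cast
  rfl

lemma toFinset_univ' {n : ℕ} : (Set.toFinite (Set.univ : Set (Fin n))).toFinset = Finset.univ := by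
  ext x; simp

lemma toFinset_compl' {n : ℕ} (W : Set (Fin n)) :
    (Set.toFinite Wᶜ).toFinset = (Set.toFinite W).toFinsetᶜ := by
  ext x; simp [Set.mem_setOf_eq]

lemma ncard_toFinset' {n : ℕ} (U : Set (Fin n)) :
    U.ncard = (Set.toFinite U).toFinset.card :=
  Set.ncard_eq_toFinset_card U (Set.toFinite U)

lemma ncard_le' {n : ℕ} (U : Set (Fin n)) : (U.ncard : ℝ) ≤ n := by
  have := Set.ncard_le_ncard (Set.subset_univ U) Set.finite_univ
  simp only [Set.ncard_univ, Nat.card_eq_fintype_card, Fintype.card_fin] at this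
  exact_mod_cast this

lemma ncard_compl' {n : ℕ} (U : Set (Fin n)) : (Uᶜ.ncard : ℝ) = n - U.ncard := by
  have h : U.ncard + Uᶜ.ncard = n := by
    simpa [Set.ncard_univ] using Set.ncard_add_ncard_compl U
  push_cast [← h]; ring

lemma ePairs_split {n : ℕ} (G : SimpleGraph (Fin n)) (U W : Set (Fin n)) :
    (ePairs G U W : ℝ) + ePairs G U Wᶜ = ePairs G U Set.univ := by
  rw [ePairs_eq_sum_s13, ePairs_eq_sum_s13, ePairs_eq_sum_s13, ← Finset.sum_add_distrib]
  refine Finset.sum_congr rfl fun i _ => ?_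
  rw [toFinset_compl', Finset.sum_add_sum_compl, toFinset_univ']

lemma ePairs_split' {n : ℕ} (G : SimpleGraph (Fin n)) (U W : Set (Fin n)) :
    (ePairs G U W : ℝ) + ePairs G Uᶜ W = ePairs G Set.univ W := by
  rw [ePairs_eq_sum_s13, ePairs_eq_sum_s13, ePairs_eq_sum_s13, Finset.sum_comm,
    Finset.sum_comm (s := (Set.toFinite Uᶜ).toFinset),
    Finset.sum_comm (s := (Set.toFinite (Set.univ : Set (Fin n))).toFinset),
    ← Finset.sum_add_distrib]
  refine Finset.sum_congr rfl fun j _ => ?_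
  rw [toFinset_compl', Finset.sum_add_sum_compl, toFinset_univ']

lemma ePairs_univ_right {n : ℕ} (G : SimpleGraph (Fin n)) (U : Set (Fin n)) :
    (ePairs G U Set.univ : ℝ) = ∑ v ∈ (Set.toFinite U).toFinset, (degOf G v : ℝ) := by
  rw [ePairs_eq_sum_s13, toFinset_univ']
  exact Finset.sum_congr rfl fun v _ => (degOf_eq_sum G v).symm

lemma ePairs_univ_left {n : ℕ} (G : SimpleGraph (Fin n)) (W : Set (Fin n)) :
    (ePairs G Set.univ W : ℝ) = ∑ v ∈ (Set.toFinite W).toFinset, (degOf G v : ℝ) := by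
  rw [ePairs_eq_sum_s13, toFinset_univ', Finset.sum_comm]
  refine Finset.sum_congr rfl fun v _ => ?_
  rw [degOf_eq_sum]
  exact Finset.sum_congr rfl fun i _ => by rw [SimpleGraph.adj_comm]

lemma ePairs_coe_eq_sum {n : ℕ} (G : SimpleGraph (Fin n)) (I J : Finset (Fin n)) :
    (ePairs G ↑I ↑J : ℝ) = ∑ i ∈ I, ∑ j ∈ J, (if G.Adj i j then (1:ℝ) else 0) := by
  rw [ePairs_eq_sum_s13]
  rw [show (Set.toFinite (↑I : Set (Fin n))).toFinset = I by ext x; simp; exact Iff.rfl]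
  rw [show (Set.toFinite (↑J : Set (Fin n))).toFinset = J by ext x; simp; exact Iff.rfl]


open Finset Topology Filter

section Super
variable {n : ℕ}

variable {n : ℕ}

inductive MReach (S M : Fin n → Fin n → ℝ) : Bool → Fin n → Prop
  | row_base (i : Fin n) : (∑ j, S i j) < 1 → MReach S M true i
  | col_step (i j : Fin n) : MReach S M true i → S i j < M i j → MReach S M false j
  | row_step (i j : Fin n) : MReach S M false j → 0 < S i j → MReach S M true i

lemma sum_single_row (i j : Fin n) (c : ℤ) (a : Fin n) :
    ∑ b', (if a = i ∧ b' = j then c else 0) = if a = i then c else 0 := by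
  by_cases h : a = i <;> simp [h]

lemma sum_single_col (i j : Fin n) (c : ℤ) (b' : Fin n) :
    ∑ a, (if a = i ∧ b' = j then c else 0) = if b' = j then c else 0 := by
  by_cases h : b' = j <;> simp [h]

lemma mreach_T {S M : Fin n → Fin n → ℝ} {b : Bool} {v : Fin n} (h : MReach S M b v) :
    ∃ T : Fin n → Fin n → ℤ,
      (∀ i j, (0 < T i j → S i j < M i j) ∧ (T i j < 0 → 0 < S i j)) ∧
      (b = true →
        (∀ j, ∑ i, T i j = 0) ∧
        (∀ i, i ≠ v → (∑ j, T i j = 0 ∨ (0 < ∑ j, T i j ∧ ∑ j, S i j < 1))) ∧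
        (∑ j, T v j = -1 ∨ (0 ≤ ∑ j, T v j ∧ ∑ j, S v j < 1))) ∧
      (b = false →
        (∀ j', j' ≠ v → ∑ i, T i j' = 0) ∧
        (∑ i, T i v = 1) ∧
        (∀ i, ∑ j, T i j = 0 ∨ (0 < ∑ j, T i j ∧ ∑ j, S i j < 1))) := by
  induction h with
  | row_base i hi =>
      exact ⟨0, by simp, fun _ => ⟨by simp, by simp, Or.inr ⟨by simp, hi⟩⟩, by simp⟩
  | col_step i j hreach hlt IH =>
      obtain ⟨T, hsign, hrowS, -⟩ := IH
      obtain ⟨hcols, hrows, hrowi⟩ := hrowS rfl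
      refine ⟨fun a b' => T a b' + (if a = i ∧ b' = j then 1 else 0), ?_, by simp, fun _ => ?_⟩
      · intro a b'
        by_cases h : a = i ∧ b' = j
        · obtain ⟨rfl, rfl⟩ := h
          refine ⟨fun _ => hlt, fun hneg => (hsign a b').2 (by simp at hneg; omega)⟩
        · simpa [h] using hsign a b'
      · have hrow' : ∀ a, (∑ b', (T a b' + if a = i ∧ b' = j then 1 else 0))
            = (∑ b', T a b') + (if a = i then 1 else 0) := by
          intro a; rw [Finset.sum_add_distrib, sum_single_row]
        have hcol' : ∀ b', (∑ a, (T a b' + if a = i ∧ b' = j then 1 else 0))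
            = (∑ a, T a b') + (if b' = j then 1 else 0) := by
          intro b'; rw [Finset.sum_add_distrib, sum_single_col]
        refine ⟨fun j' hj' => ?_, ?_, fun a => ?_⟩
        · rw [hcol', hcols j', if_neg hj']; ring
        · rw [hcol', hcols j, if_pos rfl]; ring
        · rw [hrow']
          by_cases ha : a = i
          · subst ha
            rcases hrowi with h1 | ⟨h1, h2⟩
            · left; simp only [eq_self_iff_true, if_true]; linarith
            · right; simp only [eq_self_iff_true, if_true]; exact ⟨by linarith, h2⟩
          · rcases hrows a ha with h1 | ⟨h1, h2⟩
            · left; simp [ha, h1]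
            · right; simp only [if_neg ha]; exact ⟨by linarith, h2⟩
  | row_step i j hreach hpos IH =>
      obtain ⟨T, hsign, -, hcolS⟩ := IH
      obtain ⟨hcols, hcolj, hrows⟩ := hcolS rfl
      refine ⟨fun a b' => T a b' + (if a = i ∧ b' = j then -1 else 0), ?_, fun _ => ?_, by simp⟩
      · intro a b'
        by_cases h : a = i ∧ b' = j
        · obtain ⟨rfl, rfl⟩ := h
          refine ⟨fun hgt => (hsign a b').1 (by simp at hgt; omega), fun _ => hpos⟩
        · simpa [h] using hsign a b'
      · have hrow' : ∀ a, (∑ b', (T a b' + if a = i ∧ b' = j then -1 else 0))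
            = (∑ b', T a b') + (if a = i then -1 else 0) := by
          intro a; rw [Finset.sum_add_distrib, sum_single_row]
        have hcol' : ∀ b', (∑ a, (T a b' + if a = i ∧ b' = j then -1 else 0))
            = (∑ a, T a b') + (if b' = j then -1 else 0) := by
          intro b'; rw [Finset.sum_add_distrib, sum_single_col]
        refine ⟨fun j' => ?_, fun a ha => ?_, ?_⟩
        · rw [hcol']
          by_cases hj' : j' = j
          · subst hj'; rw [hcolj, if_pos rfl]; ring
          · rw [hcols j' hj', if_neg hj']; ring
        · rw [hrow', if_neg ha]
          rcases hrows a with h1 | ⟨h1, h2⟩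
          · left; linarith
          · right; exact ⟨by linarith, h2⟩
        · rw [hrow', if_pos rfl]
          rcases hrows i with h1 | ⟨h1, h2⟩
          · left; linarith
          · right; exact ⟨by linarith, h2⟩



-- small helpers for the eventually-arguments
lemma ev_lt_const {x c t : ℝ} (h : x < c) :
    ∀ᶠ ε in nhdsWithin (0:ℝ) (Set.Ioi 0), x + ε * t < c := by
  have hten : Filter.Tendsto (fun ε : ℝ => x + ε * t) (nhdsWithin 0 (Set.Ioi 0)) (𝓝 (x + 0 * t)) :=
    ((continuous_const.add (continuous_id.mul continuous_const)).tendsto 0).mono_left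
      nhdsWithin_le_nhds
  simp only [zero_mul, add_zero] at hten
  exact hten.eventually_lt_const h

lemma ev_const_lt {x c t : ℝ} (h : c < x) :
    ∀ᶠ ε in nhdsWithin (0:ℝ) (Set.Ioi 0), c < x + ε * t := by
  have hten : Filter.Tendsto (fun ε : ℝ => x + ε * t) (nhdsWithin 0 (Set.Ioi 0)) (𝓝 (x + 0 * t)) :=
    ((continuous_const.add (continuous_id.mul continuous_const)).tendsto 0).mono_left
      nhdsWithin_le_nhds
  simp only [zero_mul, add_zero] at hten
  exact hten.eventually_const_lt h

lemma ev_pos : ∀ᶠ ε in nhdsWithin (0:ℝ) (Set.Ioi 0), 0 < ε :=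
  eventually_mem_nhdsWithin

lemma exists_doublyStochastic_le (M : Matrix (Fin n) (Fin n) ℝ)
    (hM : ∀ i j, 0 ≤ M i j)
    (hcond : ∀ I J : Finset (Fin n),
      (I.card : ℝ) + J.card - n ≤ ∑ i ∈ I, ∑ j ∈ J, M i j) :
    ∃ S ∈ doublyStochastic ℝ (Fin n), ∀ i j, S i j ≤ M i j := by
  classical
  -- the feasible set
  set Q : Set (Fin n → Fin n → ℝ) :=
    (Set.Icc (0 : Fin n → Fin n → ℝ) (fun i j => M i j)) ∩
      {f | (∀ i, ∑ j, f i j ≤ 1) ∧ (∀ j, ∑ i, f i j ≤ 1)} with hQdef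
  have hQc : IsCompact Q := by
    apply IsCompact.inter_right isCompact_Icc
    have h1 : IsClosed {f : Fin n → Fin n → ℝ | ∀ i, ∑ j, f i j ≤ 1} := by
      rw [show {f : Fin n → Fin n → ℝ | ∀ i, ∑ j, f i j ≤ 1}
          = ⋂ i, {f : Fin n → Fin n → ℝ | ∑ j, f i j ≤ 1} by ext f; simp]
      exact isClosed_iInter fun i => isClosed_le
        (continuous_finset_sum _ fun j _ => (continuous_apply j).comp (continuous_apply i))
        continuous_const
    have h2 : IsClosed {f : Fin n → Fin n → ℝ | ∀ j, ∑ i, f i j ≤ 1} := by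
      rw [show {f : Fin n → Fin n → ℝ | ∀ j, ∑ i, f i j ≤ 1}
          = ⋂ j, {f : Fin n → Fin n → ℝ | ∑ i, f i j ≤ 1} by ext f; simp]
      exact isClosed_iInter fun j => isClosed_le
        (continuous_finset_sum _ fun i _ => (continuous_apply j).comp (continuous_apply i))
        continuous_const
    exact h1.inter h2
  have h0Q : (0 : Fin n → Fin n → ℝ) ∈ Q := by
    refine ⟨Set.mem_Icc.mpr ⟨le_refl _, fun i => fun j => hM i j⟩,
      fun i => by simp, fun j => by simp⟩
  have hcont : Continuous (fun f : Fin n → Fin n → ℝ => ∑ i, ∑ j, f i j) :=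
    continuous_finset_sum _ fun i _ => continuous_finset_sum _ fun j _ =>
      (continuous_apply j).comp (continuous_apply i)
  obtain ⟨S, hSQ, hSmax⟩ := hQc.exists_isMaxOn ⟨0, h0Q⟩ hcont.continuousOn
  have hS0 : ∀ i j, 0 ≤ S i j := fun i j => (Set.mem_Icc.mp hSQ.1).1 i j
  have hSM : ∀ i j, S i j ≤ M i j := fun i j => (Set.mem_Icc.mp hSQ.1).2 i j
  have hrow : ∀ i, ∑ j, S i j ≤ 1 := hSQ.2.1
  have hcol : ∀ j, ∑ i, S i j ≤ 1 := hSQ.2.2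
  -- every reachable column is saturated
  have claimA : ∀ j : Fin n, MReach S (fun i j => M i j) false j → ∑ i, S i j = 1 := by
    intro j hj
    by_contra hne
    have hjlt : ∑ i, S i j < 1 := lt_of_le_of_ne (hcol j) hne
    obtain ⟨T, hsign, -, hcolT⟩ := mreach_T hj
    obtain ⟨hTc, hTv, hTrows⟩ := hcolT rfl
    set Tr : Fin n → Fin n → ℝ := fun a b' => ((T a b' : ℤ) : ℝ) with hTrdef
    have hev : ∀ᶠ ε in nhdsWithin (0:ℝ) (Set.Ioi 0),
        (fun a b' => S a b' + ε * Tr a b') ∈ Q ∧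
        (∑ i, ∑ j', S i j') < ∑ i, ∑ j', (S i j' + ε * Tr i j') := by
      have hentry : ∀ᶠ ε in nhdsWithin (0:ℝ) (Set.Ioi 0),
          ∀ a b', 0 ≤ S a b' + ε * Tr a b' ∧ S a b' + ε * Tr a b' ≤ M a b' := by
        rw [Filter.eventually_all]
        intro a
        rw [Filter.eventually_all]
        intro b'
        have hlow : ∀ᶠ ε in nhdsWithin (0:ℝ) (Set.Ioi 0), 0 ≤ S a b' + ε * Tr a b' := by
          rcases lt_trichotomy (T a b') 0 with ht | ht | ht
          · have : 0 < S a b' := (hsign a b').2 ht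
            exact (ev_const_lt this).mono fun ε h => h.le
          · apply Filter.Eventually.of_forall
            intro ε
            simp [hTrdef, ht, hS0 a b']
          · apply ev_pos.mono
            intro ε hε
            have : (0:ℝ) ≤ Tr a b' := by simp [hTrdef]; exact_mod_cast ht.le
            nlinarith [hS0 a b']
        have hhigh : ∀ᶠ ε in nhdsWithin (0:ℝ) (Set.Ioi 0), S a b' + ε * Tr a b' ≤ M a b' := by
          rcases lt_trichotomy (T a b') 0 with ht | ht | ht
          · apply ev_pos.mono
            intro ε hε
            have : Tr a b' ≤ 0 := by simp [hTrdef]; exact_mod_cast ht.le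
            nlinarith [hSM a b']
          · apply Filter.Eventually.of_forall
            intro ε
            simp [hTrdef, ht, hSM a b']
          · exact ((ev_lt_const ((hsign a b').1 ht))).mono fun ε h => h.le
        exact hlow.and hhigh
      have hrowsum : ∀ a, ∀ ε : ℝ, ∑ j', (S a j' + ε * Tr a j')
          = (∑ j', S a j') + ε * ((∑ j', T a j' : ℤ) : ℝ) := by
        intro a ε
        rw [Finset.sum_add_distrib, ← Finset.mul_sum]
        push_cast
        rfl
      have hcolsum : ∀ b', ∀ ε : ℝ, ∑ a, (S a b' + ε * Tr a b')
          = (∑ a, S a b') + ε * ((∑ a, T a b' : ℤ) : ℝ) := by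
        intro b' ε
        rw [Finset.sum_add_distrib, ← Finset.mul_sum]
        push_cast
        rfl
      have hrows : ∀ᶠ ε in nhdsWithin (0:ℝ) (Set.Ioi 0),
          ∀ a, ∑ j', (S a j' + ε * Tr a j') ≤ 1 := by
        rw [Filter.eventually_all]
        intro a
        rcases hTrows a with h1 | ⟨h1, h2⟩
        · apply Filter.Eventually.of_forall
          intro ε
          rw [hrowsum a ε, h1]
          simpa using hrow a
        · exact (ev_lt_const h2 (t := ((∑ j', T a j' : ℤ) : ℝ))).mono fun ε h => by
            rw [hrowsum a ε]; exact h.le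
      have hcols : ∀ᶠ ε in nhdsWithin (0:ℝ) (Set.Ioi 0),
          ∀ b', ∑ a, (S a b' + ε * Tr a b') ≤ 1 := by
        rw [Filter.eventually_all]
        intro b'
        by_cases hb : b' = j
        · subst hb
          exact (ev_lt_const hjlt (t := ((∑ a, T a b' : ℤ) : ℝ))).mono fun ε h => by
            rw [hcolsum b' ε]; exact h.le
        · apply Filter.Eventually.of_forall
          intro ε
          rw [hcolsum b' ε, hTc b' hb]
          simpa using hcol b'
      have hsig : ∀ᶠ ε in nhdsWithin (0:ℝ) (Set.Ioi 0),
          (∑ i, ∑ j', S i j') < ∑ i, ∑ j', (S i j' + ε * Tr i j') := by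
        apply ev_pos.mono
        intro ε hε
        have hTtot : ∑ i, ∑ j', (T i j' : ℤ) = 1 := by
          rw [Finset.sum_comm]
          rw [Finset.sum_eq_single j (fun b' _ hb => hTc b' hb) (by simp)]
          exact hTv
        have : ∑ i, ∑ j', (S i j' + ε * Tr i j') = (∑ i, ∑ j', S i j') + ε := by
          have := fun i => hrowsum i ε
          rw [Finset.sum_congr rfl fun i _ => hrowsum i ε, Finset.sum_add_distrib,
            ← Finset.mul_sum]
          have hc : (∑ i, ((∑ j', T i j' : ℤ) : ℝ)) = 1 := by exact_mod_cast hTtot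
          rw [hc, mul_one]
        rw [this]
        linarith
      refine ((hentry.and (hrows.and hcols)).and hsig).mono ?_
      rintro ε ⟨⟨h1, h2, h3⟩, h4⟩
      exact ⟨⟨Set.mem_Icc.mpr ⟨fun a => fun b' => (h1 a b').1, fun a => fun b' => (h1 a b').2⟩,
        h2, h3⟩, h4⟩
    obtain ⟨ε, hmem, hlt⟩ := hev.exists
    exact absurd (hSmax hmem) (not_le.mpr hlt)
  -- the cut inequality: total sum is n
  set X : Finset (Fin n) := Finset.univ.filter (fun i => MReach S (fun i j => M i j) true i)
    with hXdef
  set Y : Finset (Fin n) := Finset.univ.filter (fun j => MReach S (fun i j => M i j) false j)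
    with hYdef
  have hmemX : ∀ i, i ∈ X ↔ MReach S (fun i j => M i j) true i := by
    intro i; simp [hXdef]
  have hmemY : ∀ j, j ∈ Y ↔ MReach S (fun i j => M i j) false j := by
    intro j; simp [hYdef]
  have hXrow : ∀ i ∉ X, ∑ j, S i j = 1 := by
    intro i hi
    by_contra hne
    exact hi ((hmemX i).mpr (MReach.row_base i (lt_of_le_of_ne (hrow i) hne)))
  have hXY : ∀ i ∈ X, ∀ j' ∉ Y, S i j' = M i j' := by
    intro i hi j' hj'
    by_contra hne
    exact hj' ((hmemY j').mpr (MReach.col_step i j' ((hmemX i).mp hi)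
      (lt_of_le_of_ne (hSM i j') hne)))
  have hX0 : ∀ i ∉ X, ∀ j' ∈ Y, S i j' = 0 := by
    intro i hi j' hj'
    by_contra hne
    exact hi ((hmemX i).mpr (MReach.row_step i j' ((hmemY j').mp hj')
      (lt_of_le_of_ne (hS0 i j') (Ne.symm hne))))
  have hcardX : (Xᶜ.card : ℝ) = n - X.card := by
    rw [Finset.card_compl]
    have : X.card ≤ Fintype.card (Fin n) := Finset.card_le_univ X
    push_cast [Nat.cast_sub this]
    simp
  have hcardY : (Yᶜ.card : ℝ) = n - Y.card := by
    rw [Finset.card_compl]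
    have : Y.card ≤ Fintype.card (Fin n) := Finset.card_le_univ Y
    push_cast [Nat.cast_sub this]
    simp
  have htot : ∑ i, ∑ j', S i j' = n := by
    have hle : ∑ i, ∑ j', S i j' ≤ n := by
      calc ∑ i, ∑ j', S i j' ≤ ∑ _i : Fin n, (1:ℝ) := Finset.sum_le_sum fun i _ => hrow i
      _ = n := by simp
    have hge : (n:ℝ) ≤ ∑ i, ∑ j', S i j' := by
      have e1 : ∑ i, ∑ j', S i j'
          = ∑ i ∈ X, (∑ j', S i j') + ∑ i ∈ Xᶜ, (∑ j', S i j') :=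
        (Finset.sum_add_sum_compl X _).symm
      have e2 : ∑ i ∈ Xᶜ, (∑ j', S i j') = (n : ℝ) - X.card := by
        rw [Finset.sum_congr rfl (fun i hi => hXrow i (Finset.mem_compl.mp hi)),
          Finset.sum_const, nsmul_eq_mul, mul_one, hcardX]
      have e3 : ∀ i, (∑ j', S i j') = ∑ j' ∈ Y, S i j' + ∑ j' ∈ Yᶜ, S i j' :=
        fun i => (Finset.sum_add_sum_compl Y _).symm
      have e4 : ∑ i ∈ X, ∑ j' ∈ Yᶜ, S i j' = ∑ i ∈ X, ∑ j' ∈ Yᶜ, M i j' := by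
        refine Finset.sum_congr rfl fun i hi => Finset.sum_congr rfl fun j' hj' => ?_
        exact hXY i hi j' (Finset.mem_compl.mp hj')
      have e5 : ∑ i ∈ X, ∑ j' ∈ Y, S i j' = Y.card := by
        rw [Finset.sum_comm]
        have : ∀ j' ∈ Y, ∑ i ∈ X, S i j' = 1 := by
          intro j' hj'
          have hcol1 : ∑ i, S i j' = 1 := claimA j' ((hmemY j').mp hj')
          have : ∑ i ∈ X, S i j' + ∑ i ∈ Xᶜ, S i j' = 1 := by
            rw [Finset.sum_add_sum_compl]; exact hcol1
          have hz : ∑ i ∈ Xᶜ, S i j' = 0 := by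
            refine Finset.sum_eq_zero fun i hi => hX0 i (Finset.mem_compl.mp hi) j' hj'
          linarith
        rw [Finset.sum_congr rfl this, Finset.sum_const, nsmul_eq_mul, mul_one]
      have e6 : (X.card : ℝ) + Yᶜ.card - n ≤ ∑ i ∈ X, ∑ j' ∈ Yᶜ, M i j' := hcond X Yᶜ
      have e7 : ∑ i ∈ X, (∑ j', S i j')
          = (Y.card : ℝ) + ∑ i ∈ X, ∑ j' ∈ Yᶜ, M i j' := by
        rw [Finset.sum_congr rfl (fun i _ => e3 i), Finset.sum_add_distrib, e5, e4]
      rw [e1, e2, e7]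
      rw [hcardY] at e6
      linarith
    linarith
  have hrow1 : ∀ i, ∑ j', S i j' = 1 := by
    by_contra hne
    push_neg at hne
    obtain ⟨i0, hi0⟩ := hne
    have hi0' : ∑ j', S i0 j' < 1 := lt_of_le_of_ne (hrow i0) hi0
    have : ∑ i, ∑ j', S i j' < ∑ _i : Fin n, (1:ℝ) := by
      apply Finset.sum_lt_sum (fun i _ => hrow i) ⟨i0, Finset.mem_univ i0, hi0'⟩
    rw [htot] at this
    simp at this
  have hcol1 : ∀ j', ∑ i, S i j' = 1 := by
    by_contra hne
    push_neg at hne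
    obtain ⟨j0, hj0⟩ := hne
    have hj0' : ∑ i, S i j0 < 1 := lt_of_le_of_ne (hcol j0) hj0
    have : ∑ j', ∑ i, S i j' < ∑ _j : Fin n, (1:ℝ) := by
      apply Finset.sum_lt_sum (fun j' _ => hcol j') ⟨j0, Finset.mem_univ j0, hj0'⟩
    rw [← Finset.sum_comm, htot] at this
    simp at this
  refine ⟨Matrix.of S, ?_, fun i j => hSM i j⟩
  rw [mem_doublyStochastic_iff_sum]
  exact ⟨hS0, hrow1, hcol1⟩

end Super


set_option maxHeartbeats 2000000

/-- If the edge distribution is controlled by `λ̄`, `Δ - δ ≤ λ̄` and `d ≥ K λ̄ (log n)²`,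
then `δ - 9λ̄ > 0` and `A/(δ - 9λ̄)` is doubly superstochastic; equivalently,
`e(I,J) ≥ (δ - 9λ̄)(|I| + |J| - n)` for all `I, J`. -/
theorem adjMat_doubly_superstochastic :
    ∃ c : ℝ, 0 < c ∧ ∃ K : ℝ, 0 < K ∧ ∃ n₀ : ℕ, ∀ n : ℕ, n₀ ≤ n →
    ∀ (G : SimpleGraph (Fin n)) (lamb : ℝ), 0 < lamb →
    (∀ U W : Set (Fin n),
      |(ePairs G U W : ℝ) - avgDeg G / n * U.ncard * W.ncard| ≤
        lamb * Real.sqrt ((U.ncard : ℝ) * W.ncard)) →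
    (maxDeg G : ℝ) - (minDeg G : ℝ) ≤ lamb →
    avgDeg G ≥ K * lamb * (Real.log n) ^ 2 →
    (0 < (minDeg G : ℝ) - 9 * lamb) ∧
    (∃ S ∈ doublyStochastic ℝ (Fin n),
      ∀ i j, S i j ≤ adjMat G i j / ((minDeg G : ℝ) - 9 * lamb)) ∧
    (∀ I J : Set (Fin n),
      (ePairs G I J : ℝ) ≥ ((minDeg G : ℝ) - 9 * lamb) * ((I.ncard : ℝ) + J.ncard - n)) := by
  refine ⟨1, one_pos, 23, by norm_num, 3, ?_⟩
  intro n hn G lamb hl H hdel hd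
  have hn3 : (3:ℝ) ≤ n := by exact_mod_cast hn
  have hn0 : (0:ℝ) < n := by linarith
  have hlog : (1:ℝ) ≤ Real.log n := by
    rw [show (1:ℝ) = Real.log (Real.exp 1) by rw [Real.log_exp]]
    apply Real.log_le_log (Real.exp_pos 1)
    calc Real.exp 1 ≤ 2.7182818286 := Real.exp_one_lt_d9.le
    _ ≤ 3 := by norm_num
    _ ≤ n := hn3
  set D := avgDeg G with hD
  have hdlow : 23 * lamb ≤ D := by
    have h2 : (1:ℝ) ≤ (Real.log n)^2 := by nlinarith
    nlinarith [hd]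
  have hmin : ∀ v, (minDeg G : ℝ) ≤ degOf G v := by
    intro v
    have h1 : minDeg G ≤ degOf G v := Nat.sInf_le (Set.mem_range_self v)
    exact_mod_cast h1
  have hmax : ∀ v, (degOf G v : ℝ) ≤ maxDeg G := by
    intro v
    have h1 : degOf G v ≤ maxDeg G :=
      le_csSup (Set.finite_range (degOf G)).bddAbove (Set.mem_range_self v)
    exact_mod_cast h1
  have hδD : (minDeg G : ℝ) ≤ D := by
    have h1 : (n:ℝ) * minDeg G ≤ ∑ v, (degOf G v : ℝ) := by
      calc (n:ℝ) * minDeg G = ∑ _v : Fin n, (minDeg G : ℝ) := by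
            rw [Finset.sum_const]; simp [mul_comm]
      _ ≤ _ := Finset.sum_le_sum fun v _ => hmin v
    rw [hD, avgDeg, le_div_iff₀ hn0]
    nlinarith
  have hDΔ : D ≤ maxDeg G := by
    have h1 : ∑ v, (degOf G v : ℝ) ≤ (n:ℝ) * maxDeg G := by
      calc ∑ v, (degOf G v : ℝ) ≤ ∑ _v : Fin n, (maxDeg G : ℝ) :=
            Finset.sum_le_sum fun v _ => hmax v
      _ = (n:ℝ) * maxDeg G := by rw [Finset.sum_const]; simp [mul_comm]
    rw [hD, avgDeg, div_le_iff₀ hn0]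
    nlinarith
  have hDδ : D - lamb ≤ minDeg G := by linarith
  have hpos : 0 < (minDeg G : ℝ) - 9 * lamb := by linarith
  have part3 : ∀ I J : Set (Fin n),
      (ePairs G I J : ℝ) ≥ ((minDeg G : ℝ) - 9 * lamb) * ((I.ncard : ℝ) + J.ncard - n) := by
    intro I J
    have ha0 : (0:ℝ) ≤ (I.ncard : ℝ) := Nat.cast_nonneg _
    have hb0 : (0:ℝ) ≤ (J.ncard : ℝ) := Nat.cast_nonneg _
    have han : (I.ncard : ℝ) ≤ n := ncard_le' I
    have hbn : (J.ncard : ℝ) ≤ n := ncard_le' J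
    have hIc : ((Iᶜ.ncard : ℝ)) = n - I.ncard := ncard_compl' I
    have hJc : ((Jᶜ.ncard : ℝ)) = n - J.ncard := ncard_compl' J
    by_cases hs : (I.ncard : ℝ) + J.ncard - (n:ℝ) ≤ 0
    · have h1 : ((minDeg G:ℝ) - 9*lamb) * ((I.ncard : ℝ) + J.ncard - n) ≤ 0 :=
        mul_nonpos_of_nonneg_of_nonpos hpos.le hs
      exact le_trans h1 (Nat.cast_nonneg _)
    push_neg at hs
    by_cases hA : D / n * I.ncard ≤ (minDeg G : ℝ) - 9 * lamb
    · -- degree bound on the I side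
      have hEIuniv : (I.ncard : ℝ) * minDeg G ≤ ePairs G I Set.univ := by
        rw [ePairs_univ_right]
        calc (I.ncard : ℝ) * minDeg G
            = ∑ _v ∈ (Set.toFinite I).toFinset, (minDeg G : ℝ) := by
              rw [Finset.sum_const, nsmul_eq_mul, ← ncard_toFinset']
        _ ≤ _ := Finset.sum_le_sum fun v _ => hmin v
      have hsplit := ePairs_split G I J
      have hmix := H I Jᶜ
      rw [hJc] at hmix
      have hup : (ePairs G I Jᶜ : ℝ) ≤ D/n * I.ncard * ((n:ℝ) - J.ncard)
          + lamb * Real.sqrt ((I.ncard : ℝ) * ((n:ℝ) - J.ncard)) := by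
        linarith [(abs_le.mp hmix).2]
      have htnn : (0:ℝ) ≤ (n:ℝ) - J.ncard := by linarith
      have hsq : Real.sqrt ((I.ncard : ℝ) * ((n:ℝ) - J.ncard)) ≤ I.ncard := by
        have h1 : (I.ncard : ℝ) * ((n:ℝ) - J.ncard) ≤ (I.ncard : ℝ)^2 := by nlinarith
        calc Real.sqrt ((I.ncard:ℝ) * ((n:ℝ) - J.ncard)) ≤ Real.sqrt ((I.ncard:ℝ)^2) :=
              Real.sqrt_le_sqrt h1
        _ = I.ncard := Real.sqrt_sq ha0
      have hkey : 0 ≤ ((n:ℝ) - J.ncard) * (((minDeg G:ℝ) - 9*lamb) - D/n * I.ncard) :=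
        mul_nonneg htnn (by linarith)
      have hsq2 : lamb * Real.sqrt ((I.ncard:ℝ) * ((n:ℝ) - J.ncard)) ≤ lamb * I.ncard :=
        mul_le_mul_of_nonneg_left hsq hl.le
      nlinarith [hEIuniv, hup, hsplit, hkey, hsq2]
    by_cases hB : D / n * J.ncard ≤ (minDeg G : ℝ) - 9 * lamb
    · -- degree bound on the J side
      have hEJuniv : (J.ncard : ℝ) * minDeg G ≤ ePairs G Set.univ J := by
        rw [ePairs_univ_left]
        calc (J.ncard : ℝ) * minDeg G
            = ∑ _v ∈ (Set.toFinite J).toFinset, (minDeg G : ℝ) := by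
              rw [Finset.sum_const, nsmul_eq_mul, ← ncard_toFinset']
        _ ≤ _ := Finset.sum_le_sum fun v _ => hmin v
      have hsplit := ePairs_split' G I J
      have hmix := H Iᶜ J
      rw [hIc] at hmix
      have hup : (ePairs G Iᶜ J : ℝ) ≤ D/n * ((n:ℝ) - I.ncard) * J.ncard
          + lamb * Real.sqrt (((n:ℝ) - I.ncard) * J.ncard) := by
        linarith [(abs_le.mp hmix).2]
      have htnn : (0:ℝ) ≤ (n:ℝ) - I.ncard := by linarith
      have hsq : Real.sqrt (((n:ℝ) - I.ncard) * J.ncard) ≤ J.ncard := by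
        have h1 : ((n:ℝ) - I.ncard) * (J.ncard:ℝ) ≤ (J.ncard : ℝ)^2 := by nlinarith
        calc Real.sqrt (((n:ℝ) - I.ncard) * (J.ncard:ℝ)) ≤ Real.sqrt ((J.ncard:ℝ)^2) :=
              Real.sqrt_le_sqrt h1
        _ = J.ncard := Real.sqrt_sq hb0
      have hkey : 0 ≤ ((n:ℝ) - I.ncard) * (((minDeg G:ℝ) - 9*lamb) - D/n * J.ncard) :=
        mul_nonneg htnn (by linarith)
      have hsq2 : lamb * Real.sqrt (((n:ℝ) - I.ncard) * J.ncard) ≤ lamb * J.ncard :=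
        mul_le_mul_of_nonneg_left hsq hl.le
      nlinarith [hEJuniv, hup, hsplit, hkey, hsq2]
    -- both large: expander mixing
    push_neg at hA hB
    have hmix := H I J
    have hlo : D/n * I.ncard * J.ncard - lamb * Real.sqrt ((I.ncard:ℝ) * J.ncard)
        ≤ ePairs G I J := by
      linarith [(abs_le.mp hmix).1]
    have hsq : Real.sqrt ((I.ncard:ℝ) * J.ncard) ≤ n := by
      have h1 : (I.ncard:ℝ) * J.ncard ≤ (n:ℝ)^2 := by nlinarith
      calc Real.sqrt ((I.ncard:ℝ) * J.ncard) ≤ Real.sqrt ((n:ℝ)^2) := Real.sqrt_le_sqrt h1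
      _ = n := Real.sqrt_sq hn0.le
    have hDpos : (0:ℝ) < D := by linarith
    have hq : D / n * n = D := div_mul_cancel₀ D hn0.ne'
    have h13 : 13/23 * D ≤ (minDeg G : ℝ) - 9 * lamb := by linarith
    have haD : 13/23 * (n:ℝ) < I.ncard := by
      have h1 : ((minDeg G:ℝ) - 9*lamb) * n < D * I.ncard := by
        have h2 := mul_lt_mul_of_pos_right hA hn0
        nlinarith [hq, ha0]
      nlinarith [mul_le_mul_of_nonneg_right h13 hn0.le, hDpos]
    have hbD : 13/23 * (n:ℝ) < J.ncard := by
      have h1 : ((minDeg G:ℝ) - 9*lamb) * n < D * J.ncard := by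
        have h2 := mul_lt_mul_of_pos_right hB hn0
        nlinarith [hq, hb0]
      nlinarith [mul_le_mul_of_nonneg_right h13 hn0.le, hDpos]
    have hssize : (n:ℝ)/9 < (I.ncard:ℝ) + J.ncard - n := by linarith
    have hid : D/n * ((I.ncard:ℝ) * J.ncard)
        = D/n * (((n:ℝ) - I.ncard) * ((n:ℝ) - J.ncard))
          + D * ((I.ncard:ℝ) + J.ncard - n) := by
      field_simp
      ring
    have hprod : 0 ≤ D/n * (((n:ℝ) - I.ncard) * ((n:ℝ) - J.ncard)) :=
      mul_nonneg (div_nonneg hDpos.le hn0.le) (mul_nonneg (by linarith) (by linarith))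
    have hA1 : lamb * Real.sqrt ((I.ncard:ℝ) * J.ncard) ≤ lamb * n :=
      mul_le_mul_of_nonneg_left hsq hl.le
    have hA2 : lamb * n ≤ 9 * (lamb * ((I.ncard:ℝ) + J.ncard - n)) := by
      nlinarith [mul_nonneg hl.le (show (0:ℝ) ≤ 9*((I.ncard:ℝ) + J.ncard - n) - n by linarith)]
    have hA3 : ((minDeg G:ℝ) - 9*lamb) * ((I.ncard:ℝ) + J.ncard - n)
        ≤ (D - 9*lamb) * ((I.ncard:ℝ) + J.ncard - n) := by
      nlinarith [mul_nonneg (sub_nonneg.mpr hδD) hs.le]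
    nlinarith [hlo, hid, hprod, hA1, hA2, hA3]
  refine ⟨hpos, ?_, part3⟩
  obtain ⟨S, hS1, hS2⟩ := exists_doublyStochastic_le
    (Matrix.of fun i j => adjMat G i j / ((minDeg G : ℝ) - 9 * lamb))
    (fun i j => by
      simp only [Matrix.of_apply, adjMat]
      refine div_nonneg ?_ hpos.le
      by_cases h : G.Adj i j <;> simp [h])
    (fun I J => by
      have h3 := part3 ↑I ↑J
      rw [Set.ncard_coe_finset, Set.ncard_coe_finset] at h3
      have hsum : ∑ i ∈ I, ∑ j ∈ J,
          (Matrix.of fun i j => adjMat G i j / ((minDeg G : ℝ) - 9 * lamb)) i j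
          = (ePairs G ↑I ↑J : ℝ) / ((minDeg G : ℝ) - 9 * lamb) := by
        simp only [Matrix.of_apply, ← Finset.sum_div]
        rw [ePairs_coe_eq_sum]
        congr 1
      rw [hsum, le_div_iff₀ hpos]
      nlinarith [h3])
  exact ⟨S, hS1, fun i j => hS2 i j⟩
end

section
/- Let q > t ≥ 1 be real numbers with q − t − 1 ≥ 0, and let A be a real symmetric n×n matrix such that A² = tJ + (q − t)I + E, where J is the all-ones matrix, I is the identity, and E is a symmetric matrix each of whose rows has entries with absolute values summing to at most q − t − 1. If the largest eigenvalue of A is at least q − 1 and q − 1 > √(2q − 2t − 1), then every eigenvalue of A other than the largest one has absolute value at most √(2q − 2t − 1). -/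
open Matrix

private lemma quad_form_bound (n : ℕ) (E : Matrix (Fin n) (Fin n) ℝ) (c : ℝ)
    (hE : E.IsHermitian) (hrow : ∀ i, ∑ j, |E i j| ≤ c) (w : Fin n → ℝ) :
    w ⬝ᵥ (E *ᵥ w) ≤ c * (∑ k, w k * w k) := by
  have hsymm : ∀ i j, E i j = E j i := fun i j => by simpa using (hE.apply i j).symm
  have h1 : w ⬝ᵥ (E *ᵥ w) = ∑ i, ∑ j, w i * (E i j * w j) := by
    simp [dotProduct, mulVec, Finset.mul_sum]
  rw [h1]
  have step1 : ∑ i, ∑ j, w i * (E i j * w j)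
      ≤ ∑ i, ∑ j, |E i j| * ((w i)^2 + (w j)^2) / 2 := by
    refine Finset.sum_le_sum fun i _ => Finset.sum_le_sum fun j _ => ?_
    have h2 : w i * (E i j * w j) ≤ |E i j| * (|w i| * |w j|) := by
      calc w i * (E i j * w j) ≤ |w i * (E i j * w j)| := le_abs_self _
        _ = |E i j| * (|w i| * |w j|) := by rw [abs_mul, abs_mul]; ring
    nlinarith [sq_nonneg (|w i| - |w j|), sq_abs (w i), sq_abs (w j), abs_nonneg (E i j)]
  have step2 : ∑ i, ∑ j, |E i j| * ((w i)^2 + (w j)^2) / 2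
      = ∑ i, (w i)^2 * (∑ j, |E i j|) := by
    have hswap : ∑ i, ∑ j, |E i j| * (w j)^2 / 2 = ∑ i, ∑ j, |E i j| * (w i)^2 / 2 := by
      rw [Finset.sum_comm]
      refine Finset.sum_congr rfl fun i _ => Finset.sum_congr rfl fun j _ => ?_
      rw [hsymm i j]
    calc ∑ i, ∑ j, |E i j| * ((w i)^2 + (w j)^2) / 2
        = (∑ i, ∑ j, |E i j| * (w i)^2 / 2) + ∑ i, ∑ j, |E i j| * (w j)^2 / 2 := by
          rw [← Finset.sum_add_distrib]
          refine Finset.sum_congr rfl fun i _ => ?_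
          rw [← Finset.sum_add_distrib]
          exact Finset.sum_congr rfl fun j _ => by ring
      _ = ∑ i, ∑ j, |E i j| * (w i)^2 := by
          rw [hswap, ← Finset.sum_add_distrib]
          refine Finset.sum_congr rfl fun i _ => ?_
          rw [← Finset.sum_add_distrib]
          exact Finset.sum_congr rfl fun j _ => by ring
      _ = ∑ i, (w i)^2 * (∑ j, |E i j|) := by
          refine Finset.sum_congr rfl fun i _ => ?_
          rw [Finset.mul_sum]
          exact Finset.sum_congr rfl fun j _ => by ring
  have step3 : ∑ i, (w i)^2 * (∑ j, |E i j|) ≤ c * ∑ k, w k * w k := by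
    rw [Finset.mul_sum]
    refine Finset.sum_le_sum fun i _ => ?_
    have := hrow i
    nlinarith [sq_nonneg (w i)]
  linarith [step1, step2.le, step3]

set_option maxHeartbeats 1000000 in
/-- Eigenvalue bound via Courant–Weyl: if `A² = tJ + (q - t)I + E` where each row of the
symmetric matrix `E` has absolute values summing to at most `q - t - 1`, the largest
eigenvalue of `A` is at least `q - 1`, and `q - 1 > √(2q - 2t - 1)`, then every eigenvalue of
`A` other than the largest one has absolute value at most `√(2q - 2t - 1)`. -/
theorem second_eigenvalue_bound (n : ℕ) (q t : ℝ) (ht : 1 ≤ t) (htq : t < q)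
    (hqt1 : 0 ≤ q - t - 1)
    (A E : Matrix (Fin n) (Fin n) ℝ) (hA : A.IsHermitian) (hE : E.IsHermitian)
    (hsq : A * A = t • Matrix.of (fun _ _ => (1 : ℝ)) + (q - t) • (1 : Matrix (Fin n) (Fin n) ℝ) + E)
    (hrow : ∀ i, ∑ j, |E i j| ≤ q - t - 1)
    (i₀ : Fin n) (hmax : ∀ i, hA.eigenvalues i ≤ hA.eigenvalues i₀)
    (hlargest : q - 1 ≤ hA.eigenvalues i₀)
    (hgap : Real.sqrt (2 * q - 2 * t - 1) < q - 1) :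
    ∀ i, i ≠ i₀ → |hA.eigenvalues i| ≤ Real.sqrt (2 * q - 2 * t - 1) := by
  intro i hi
  set s : ℝ := 2 * q - 2 * t - 1 with hs_def
  have hs0 : (0:ℝ) ≤ s := by simp only [hs_def]; linarith
  set μ := hA.eigenvalues i with hμ
  set ν := hA.eigenvalues i₀ with hν
  -- it suffices to show μ^2 ≤ s
  suffices key : μ^2 ≤ s by
    have := Real.sqrt_le_sqrt key
    rwa [Real.sqrt_sq_eq_abs] at this
  set u : Fin n → ℝ := ⇑(hA.eigenvectorBasis i) with hu
  set v : Fin n → ℝ := ⇑(hA.eigenvectorBasis i₀) with hv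
  have huu : ∑ k, u k * u k = 1 := by
    have hn := hA.eigenvectorBasis.orthonormal.1 i
    have h2 : (inner ℝ (hA.eigenvectorBasis i) (hA.eigenvectorBasis i) : ℝ) = 1 := by
      rw [real_inner_self_eq_norm_sq, hn]; norm_num
    simp only [PiLp.inner_apply, RCLike.inner_apply, starRingEnd_apply, star_trivial] at h2
    simpa [hu, mul_comm] using h2
  have hvv : ∑ k, v k * v k = 1 := by
    have hn := hA.eigenvectorBasis.orthonormal.1 i₀
    have h2 : (inner ℝ (hA.eigenvectorBasis i₀) (hA.eigenvectorBasis i₀) : ℝ) = 1 := by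
      rw [real_inner_self_eq_norm_sq, hn]; norm_num
    simp only [PiLp.inner_apply, RCLike.inner_apply, starRingEnd_apply, star_trivial] at h2
    simpa [hv, mul_comm] using h2
  have huv : ∑ k, u k * v k = 0 := by
    have h2 := hA.eigenvectorBasis.orthonormal.2 hi
    simp only [PiLp.inner_apply, RCLike.inner_apply, starRingEnd_apply, star_trivial] at h2
    simpa [hu, hv, mul_comm] using h2
  have hvu : ∑ k, v k * u k = 0 := by
    rw [← huv]; exact Finset.sum_congr rfl fun k _ => mul_comm _ _
  have hAu : A *ᵥ u = μ • u := hA.mulVec_eigenvectorBasis i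
  have hAv : A *ᵥ v = ν • v := hA.mulVec_eigenvectorBasis i₀
  -- choose (a, b) ≠ 0 with a·(∑u) + b·(∑v) = 0
  obtain ⟨a, b, hab, habsum⟩ : ∃ a b : ℝ, 0 < a^2 + b^2 ∧
      a * (∑ k, u k) + b * (∑ k, v k) = 0 := by
    by_cases h : (∑ k, u k) = 0 ∧ (∑ k, v k) = 0
    · exact ⟨1, 0, by norm_num, by simp [h.1, h.2]⟩
    · refine ⟨∑ k, v k, -(∑ k, u k), ?_, by ring⟩
      rcases not_and_or.1 h with h' | h'
      · have : 0 < (∑ k, u k)^2 := by positivity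
        nlinarith [sq_nonneg (∑ k, v k)]
      · have : 0 < (∑ k, v k)^2 := by positivity
        nlinarith [sq_nonneg (∑ k, u k)]
  set w : Fin n → ℝ := a • u + b • v with hw
  have hwsum : ∑ k, w k = 0 := by
    simp only [hw, Pi.add_apply, Pi.smul_apply, smul_eq_mul, Finset.sum_add_distrib,
      ← Finset.mul_sum]
    exact habsum
  have hww : w ⬝ᵥ w = a^2 + b^2 := by
    simp only [hw, dotProduct, Pi.add_apply, Pi.smul_apply, smul_eq_mul]
    have : ∀ k, (a * u k + b * v k) * (a * u k + b * v k)
        = a^2 * (u k * u k) + b^2 * (v k * v k) + (a*b) * (u k * v k) + (a*b) * (v k * u k) :=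
      fun k => by ring
    simp only [this, Finset.sum_add_distrib, ← Finset.mul_sum, huu, hvv, huv, hvu]
    ring
  -- left-hand computation
  have hAAw : (A * A) *ᵥ w = (a * μ^2) • u + (b * ν^2) • v := by
    rw [← mulVec_mulVec]
    simp only [hw, mulVec_add, mulVec_smul, hAu, hAv, smul_smul]
    rw [pow_two μ, pow_two ν, ← mul_assoc, ← mul_assoc]
  have hleft : w ⬝ᵥ ((A * A) *ᵥ w) = a^2 * μ^2 + b^2 * ν^2 := by
    rw [hAAw]
    simp only [hw, dotProduct, Pi.add_apply, Pi.smul_apply, smul_eq_mul]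
    have : ∀ k, (a * u k + b * v k) * (a * μ^2 * u k + b * ν^2 * v k)
        = (a^2 * μ^2) * (u k * u k) + (b^2 * ν^2) * (v k * v k)
          + (a * b * ν^2) * (u k * v k) + (a * b * μ^2) * (v k * u k) :=
      fun k => by ring
    simp only [this, Finset.sum_add_distrib, ← Finset.mul_sum, huu, hvv, huv, hvu]
    ring
  -- right-hand computation
  have hJw : (Matrix.of (fun _ _ => (1:ℝ)) : Matrix (Fin n) (Fin n) ℝ) *ᵥ w = 0 := by
    funext k
    simp [mulVec, dotProduct, hwsum]
  have hright : w ⬝ᵥ ((A * A) *ᵥ w) = (q - t) * (a^2 + b^2) + w ⬝ᵥ (E *ᵥ w) := by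
    rw [hsq]
    rw [add_mulVec, add_mulVec, smul_mulVec, smul_mulVec, hJw, one_mulVec]
    rw [dotProduct_add, dotProduct_add, dotProduct_smul, dotProduct_smul]
    simp only [smul_zero, dotProduct_zero, smul_eq_mul, mul_zero, zero_add]
    rw [hww]
  have hEbound : w ⬝ᵥ (E *ᵥ w) ≤ (q - t - 1) * (a^2 + b^2) := by
    have h := quad_form_bound n E (q - t - 1) hE hrow w
    have : ∑ k, w k * w k = a^2 + b^2 := by rw [← hww]; rfl
    rwa [this] at h
  have hmain : a^2 * μ^2 + b^2 * ν^2 ≤ s * (a^2 + b^2) := by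
    have h := hright
    rw [hleft] at h
    have hse : s * (a^2 + b^2) = (q - t) * (a^2 + b^2) + (q - t - 1) * (a^2 + b^2) := by
      rw [hs_def]; ring
    linarith [hEbound]
  -- ν² > s
  have hν2 : s < ν^2 := by
    have h1 : Real.sqrt s < ν := lt_of_lt_of_le hgap hlargest
    have h2 : (Real.sqrt s)^2 < ν^2 := by
      have h0 : 0 ≤ Real.sqrt s := Real.sqrt_nonneg _
      nlinarith
    rwa [Real.sq_sqrt hs0] at h2
  -- conclude
  by_cases hb : b = 0
  · have ha2 : 0 < a^2 := by rw [hb] at hab; simpa using hab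
    rw [hb] at hmain
    nlinarith
  · have hb2 : 0 < b^2 := by positivity
    by_contra hc
    push_neg at hc
    have h1 : 0 < b^2 * (ν^2 - s) := mul_pos hb2 (by linarith)
    have h2 : 0 ≤ a^2 * (μ^2 - s) := mul_nonneg (sq_nonneg a) (by linarith)
    nlinarith
end

section
/- Let G be a graph on n ≥ 2 vertices with minimum degree δ and maximum degree Δ, and let λ = max{|λᵢ(A)| : i ≠ 1} where λ₁(A) ≥ … ≥ λₙ(A) are the eigenvalues of the adjacency matrix A. Then λ² ≥ (nδ − Δ²)/(n − 1); equivalently, Δ² + (n − 1)λ² ≥ nδ. -/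
open SimpleGraph

open Classical in
lemma adjMat_eq {n : ℕ} (G : SimpleGraph (Fin n)) : adjMat G = G.adjMatrix ℝ := by
  ext i j
  simp [adjMat, SimpleGraph.adjMatrix]

open Classical in
lemma row_sum_adjMat {n : ℕ} (G : SimpleGraph (Fin n)) (k : Fin n) :
    ∑ j, ‖adjMat G k j‖ = (degOf G k : ℝ) := by
  rw [degOf_eq]
  simp only [adjMat, Matrix.of_apply, apply_ite norm, norm_one, norm_zero]
  rw [Finset.sum_boole]
  congr 1
  rw [SimpleGraph.degree, neighborFinset_eq_filter]

open Classical in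
lemma sum_sq_eigs {n : ℕ} {A : Matrix (Fin n) (Fin n) ℝ} (hA : A.IsHermitian) :
    ∑ i, hA.eigenvalues i ^ 2 = (A * A).trace := by
  set U : Matrix (Fin n) (Fin n) ℝ := (hA.eigenvectorUnitary : Matrix (Fin n) (Fin n) ℝ) with hU
  have h1 : star U * U = 1 := (Unitary.mem_iff.mp hA.eigenvectorUnitary.2).1
  have h2 : star U * A * U = Matrix.diagonal (RCLike.ofReal ∘ hA.eigenvalues) :=
    by have := hA.conjStarAlgAut_star_eigenvectorUnitary; rwa [Unitary.conjStarAlgAut_star_apply] at this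
  have h3 : Matrix.diagonal (RCLike.ofReal ∘ hA.eigenvalues) *
      Matrix.diagonal (RCLike.ofReal ∘ hA.eigenvalues) = star U * (A * A) * U := by
    rw [← h2]
    have : U * star U = 1 := (Unitary.mem_iff.mp hA.eigenvectorUnitary.2).2
    calc star U * A * U * (star U * A * U) = star U * (A * (U * star U) * A) * U := by
          noncomm_ring
      _ = star U * (A * A) * U := by rw [this, Matrix.mul_one]
  have := congrArg Matrix.trace h3
  rw [Matrix.diagonal_mul_diagonal, Matrix.trace_diagonal] at this
  have h4 : U * star U = 1 := (Unitary.mem_iff.mp hA.eigenvectorUnitary.2).2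
  rw [Matrix.trace_mul_cycle, ← Matrix.mul_assoc, h4, Matrix.one_mul] at this
  rw [← this]
  apply Finset.sum_congr rfl
  intro i _
  simp [pow_two]

lemma degOf_le_maxDeg {n : ℕ} (G : SimpleGraph (Fin n)) (v : Fin n) : degOf G v ≤ maxDeg G :=
  le_csSup ((Set.finite_range _).bddAbove) ⟨v, rfl⟩

lemma minDeg_le_degOf {n : ℕ} (G : SimpleGraph (Fin n)) (v : Fin n) : minDeg G ≤ degOf G v :=
  Nat.sInf_le ⟨v, rfl⟩

lemma abs_adjEigs_le {n : ℕ} (G : SimpleGraph (Fin n)) (i : Fin n) :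
    |adjEigs G i| ≤ (maxDeg G : ℝ) := by
  classical
  have hspec : adjEigs G i ∈ spectrum ℝ (adjMat G) :=
    (adjMat_isHermitian G).eigenvalues_mem_spectrum_real i
  have hspec' : adjEigs G i ∈ spectrum ℝ (Matrix.toLin' (adjMat G)) := by
    rwa [show Matrix.toLin' (adjMat G) = Matrix.toLinAlgEquiv' (adjMat G) from rfl,
      AlgEquiv.spectrum_eq]
  have heig : Module.End.HasEigenvalue (Matrix.toLin' (adjMat G)) (adjEigs G i) :=
    Module.End.hasEigenvalue_iff_mem_spectrum.mpr hspec'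
  obtain ⟨k, hk⟩ := eigenvalue_mem_ball heig
  have hdiag : adjMat G k k = 0 := by simp [adjMat]
  rw [Metric.mem_closedBall, hdiag, Real.dist_0_eq_abs] at hk
  calc |adjEigs G i| ≤ ∑ j ∈ Finset.univ.erase k, ‖adjMat G k j‖ := hk
    _ ≤ ∑ j, ‖adjMat G k j‖ :=
        Finset.sum_le_sum_of_subset_of_nonneg (Finset.erase_subset _ _)
          (fun _ _ _ => norm_nonneg _)
    _ = (degOf G k : ℝ) := row_sum_adjMat G k
    _ ≤ (maxDeg G : ℝ) := by exact_mod_cast degOf_le_maxDeg G k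

/-- If `λ = max{|λᵢ(A)| : i ≠ 1}`, then `λ² ≥ (nδ - Δ²)/(n - 1)`; equivalently,
`Δ² + (n - 1)λ² ≥ nδ`. -/
theorem lambda_sq_lower_bound (n : ℕ) (hn : 2 ≤ n) (G : SimpleGraph (Fin n)) (lam : ℝ)
    (i₀ : Fin n) (hmax : ∀ i, adjEigs G i ≤ adjEigs G i₀)
    (hub : ∀ i, i ≠ i₀ → |adjEigs G i| ≤ lam)
    (hattained : ∃ i, i ≠ i₀ ∧ |adjEigs G i| = lam) :
    lam ^ 2 ≥ ((n : ℝ) * minDeg G - (maxDeg G : ℝ) ^ 2) / ((n : ℝ) - 1) ∧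
      (maxDeg G : ℝ) ^ 2 + ((n : ℝ) - 1) * lam ^ 2 ≥ (n : ℝ) * minDeg G := by
  classical
  have hn1 : (1 : ℝ) < (n : ℝ) := by exact_mod_cast hn.trans_lt' one_lt_two
  have key : (n : ℝ) * minDeg G ≤ (maxDeg G : ℝ) ^ 2 + ((n : ℝ) - 1) * lam ^ 2 := by
    have h1 : (n : ℝ) * minDeg G ≤ ∑ v : Fin n, (degOf G v : ℝ) := by
      calc (n : ℝ) * minDeg G = ∑ _v : Fin n, (minDeg G : ℝ) := by
            simp [Finset.sum_const, mul_comm]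
        _ ≤ ∑ v : Fin n, (degOf G v : ℝ) :=
            Finset.sum_le_sum fun v _ => by exact_mod_cast minDeg_le_degOf G v
    have h2 : ∑ v : Fin n, (degOf G v : ℝ) = ∑ i, adjEigs G i ^ 2 := by
      rw [adjEigs, sum_sq_eigs (adjMat_isHermitian G), Matrix.trace, adjMat_eq]
      apply Finset.sum_congr rfl
      intro v _
      rw [Matrix.diag_apply, SimpleGraph.adjMatrix_mul_self_apply_self, degOf_eq]
    have h3 : ∑ i, adjEigs G i ^ 2 =
        adjEigs G i₀ ^ 2 + ∑ i ∈ Finset.univ.erase i₀, adjEigs G i ^ 2 :=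
      (Finset.add_sum_erase _ _ (Finset.mem_univ i₀)).symm
    have h4 : adjEigs G i₀ ^ 2 ≤ (maxDeg G : ℝ) ^ 2 := by
      rw [← sq_abs]
      exact pow_le_pow_left₀ (abs_nonneg _) (abs_adjEigs_le G i₀) 2
    have h5 : ∑ i ∈ Finset.univ.erase i₀, adjEigs G i ^ 2 ≤ ((n : ℝ) - 1) * lam ^ 2 := by
      calc ∑ i ∈ Finset.univ.erase i₀, adjEigs G i ^ 2
          ≤ ∑ _i ∈ Finset.univ.erase i₀, lam ^ 2 := by
            refine Finset.sum_le_sum fun i hi => ?_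
            rw [← sq_abs]
            exact pow_le_pow_left₀ (abs_nonneg _) (hub i (Finset.ne_of_mem_erase hi)) 2
        _ = ((n : ℝ) - 1) * lam ^ 2 := by
            rw [Finset.sum_const, Finset.card_erase_of_mem (Finset.mem_univ i₀)]
            simp only [Finset.card_univ, Fintype.card_fin, nsmul_eq_mul]
            congr 1
            push_cast [Nat.cast_sub (by omega : 1 ≤ n)]
            ring
    linarith
  refine ⟨?_, key⟩
  rw [ge_iff_le, div_le_iff₀ (by linarith)]
  linarith
end

section
/- Let n ≥ 2 and let F be a family of permutations of {1, …, n} such that for any two distinct σ, τ ∈ F there exists i ∈ {1, …, n−1} with σ(i) = τ(i+1) or τ(i) = σ(i+1). Then H_{4n}(K_{2,3}) ≥ |F|; that is, there is a family of |F| Hamilton paths in K_{4n} such that the union of any two distinct paths in the family contains K_{2,3} as a subgraph. (Explicitly, labeling the 4n vertices a₁,b₁,x₁,y₁,…,aₙ,bₙ,xₙ,yₙ, the path associated to σ is a₁, x_{σ(1)}, b₁, y_{σ(1)}, a₂, x_{σ(2)}, b₂, y_{σ(2)}, …, aₙ, x_{σ(n)}, bₙ, y_{σ(n)}.) -/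
open SimpleGraph

/-- `H` is contained in `G` as a subgraph:
there is an injective map preserving adjacency. -/
def ContainsCopy {W V : Type*} (H : SimpleGraph W) (G : SimpleGraph V) : Prop :=
  ∃ f : W ↪ V, ∀ ⦃a b : W⦄, H.Adj a b → G.Adj (f a) (f b)

/-- The union of (the edge sets of) two walks in the complete graph on `Fin n`,
as a simple graph on `Fin n`. -/
def walkUnion {n : ℕ} {u v u' v' : Fin n}
    (p : (⊤ : SimpleGraph (Fin n)).Walk u v) (q : (⊤ : SimpleGraph (Fin n)).Walk u' v') :
    SimpleGraph (Fin n) :=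
  (p.toSubgraph ⊔ q.toSubgraph).spanningCoe

variable {V : Type*}

def mkWalk (f : ℕ → V) : (a m : ℕ) → (∀ k, a ≤ k → k < a + m → f k ≠ f (k + 1)) →
    (⊤ : SimpleGraph V).Walk (f a) (f (a + m))
  | a, 0, _ => Walk.nil.copy rfl (by rw [Nat.add_zero])
  | a, m + 1, h =>
    Walk.cons (by simp only [top_adj]; exact h a le_rfl (by omega))
      ((mkWalk f (a + 1) m (fun k h1 h2 => h k (by omega) (by omega))).copy rfl
        (congrArg f (by omega)))

lemma mkWalk_support (f : ℕ → V) : ∀ (a m : ℕ) (h : ∀ k, a ≤ k → k < a + m → f k ≠ f (k + 1)),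
    (mkWalk f a m h).support = (List.range (m + 1)).map (fun i => f (a + i))
  | a, 0, h => by simp [mkWalk, List.range_succ]
  | a, m + 1, h => by
    rw [mkWalk, Walk.support_cons, Walk.support_copy, mkWalk_support]
    conv_rhs => rw [List.range_succ_eq_map]
    simp only [List.map_cons, List.map_map, Nat.add_zero, List.cons.injEq]
    exact ⟨trivial, List.map_congr_left fun i _ => congrArg f (by omega)⟩

lemma mkWalk_edge_mem (f : ℕ → V) : ∀ (a m : ℕ) (h : ∀ k, a ≤ k → k < a + m → f k ≠ f (k + 1))
    (k : ℕ), a ≤ k → k < a + m → s(f k, f (k + 1)) ∈ (mkWalk f a m h).edges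
  | a, 0, h, k, hk1, hk2 => absurd hk2 (by omega)
  | a, m + 1, h, k, hk1, hk2 => by
    rw [mkWalk, Walk.edges_cons, Walk.edges_copy]
    rcases eq_or_lt_of_le hk1 with rfl | hlt
    · exact List.mem_cons_self
    · exact List.mem_cons_of_mem _ (mkWalk_edge_mem f (a+1) m _ k (by omega) (by omega))

lemma mkWalk_adj (f : ℕ → V) (a m : ℕ) (h : ∀ k, a ≤ k → k < a + m → f k ≠ f (k + 1))
    (k : ℕ) (hk1 : a ≤ k) (hk2 : k < a + m) :
    (mkWalk f a m h).toSubgraph.Adj (f k) (f (k + 1)) :=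
  (Subgraph.mem_edgeSet).mp ((Walk.mem_edges_toSubgraph _).mpr (mkWalk_edge_mem f a m h k hk1 hk2))

def vt (n : ℕ) (hn : 0 < n) (σ : Equiv.Perm (Fin n)) (k : ℕ) : Fin (4 * n) :=
  if k % 4 = 0 then ⟨4 * (k / 4 % n), by have := Nat.mod_lt (k / 4) hn; omega⟩
  else if k % 4 = 1 then
    ⟨4 * (σ ⟨k / 4 % n, Nat.mod_lt _ hn⟩ : Fin n) + 1,
      by have := (σ ⟨k / 4 % n, Nat.mod_lt _ hn⟩).isLt; omega⟩
  else if k % 4 = 2 then ⟨4 * (k / 4 % n) + 2, by have := Nat.mod_lt (k / 4) hn; omega⟩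
  else
    ⟨4 * (σ ⟨k / 4 % n, Nat.mod_lt _ hn⟩ : Fin n) + 3,
      by have := (σ ⟨k / 4 % n, Nat.mod_lt _ hn⟩).isLt; omega⟩

lemma vt_mod4 (n : ℕ) (hn : 0 < n) (σ : Equiv.Perm (Fin n)) (k : ℕ) :
    (vt n hn σ k).val % 4 = k % 4 := by
  unfold vt
  split_ifs with h1 h2 h3 <;> simp only <;> omega

lemma vt0 (n : ℕ) (hn : 0 < n) (σ : Equiv.Perm (Fin n)) (i : ℕ) (hi : i < n) :
    (vt n hn σ (4 * i)).val = 4 * i := by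
  unfold vt
  rw [if_pos (by omega)]
  simp only
  rw [Nat.mul_div_cancel_left _ (by norm_num), Nat.mod_eq_of_lt hi]

lemma vt_arg (n : ℕ) (hn : 0 < n) (k i : ℕ) (hi : i < n) (h4 : k / 4 = i) :
    (⟨k / 4 % n, Nat.mod_lt _ hn⟩ : Fin n) = ⟨i, hi⟩ :=
  Fin.ext (show k / 4 % n = i by rw [h4, Nat.mod_eq_of_lt hi])

lemma vt1 (n : ℕ) (hn : 0 < n) (σ : Equiv.Perm (Fin n)) (i : ℕ) (hi : i < n) :
    (vt n hn σ (4 * i + 1)).val = 4 * (σ ⟨i, hi⟩ : Fin n).val + 1 := by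
  unfold vt
  rw [if_neg (by omega), if_pos (by omega)]
  simp only [vt_arg n hn (4 * i + 1) i hi (by omega)]

lemma vt2 (n : ℕ) (hn : 0 < n) (σ : Equiv.Perm (Fin n)) (i : ℕ) (hi : i < n) :
    (vt n hn σ (4 * i + 2)).val = 4 * i + 2 := by
  unfold vt
  rw [if_neg (by omega), if_neg (by omega), if_pos (by omega)]
  simp only
  have h4 : (4 * i + 2) / 4 = i := by omega
  rw [h4, Nat.mod_eq_of_lt hi]

lemma vt3 (n : ℕ) (hn : 0 < n) (σ : Equiv.Perm (Fin n)) (i : ℕ) (hi : i < n) :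
    (vt n hn σ (4 * i + 3)).val = 4 * (σ ⟨i, hi⟩ : Fin n).val + 3 := by
  unfold vt
  rw [if_neg (by omega), if_neg (by omega), if_neg (by omega)]
  simp only [vt_arg n hn (4 * i + 3) i hi (by omega)]

lemma vt_step (n : ℕ) (hn : 0 < n) (σ : Equiv.Perm (Fin n)) :
    ∀ k, 0 ≤ k → k < 0 + (4 * n - 1) → vt n hn σ k ≠ vt n hn σ (k + 1) := by
  intro k _ _ heq
  have h1 := vt_mod4 n hn σ k
  have h2 := vt_mod4 n hn σ (k + 1)
  rw [heq] at h1
  omega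

lemma vt_inj (n : ℕ) (hn : 0 < n) (σ : Equiv.Perm (Fin n)) {k k' : ℕ}
    (hk : k < 4 * n) (hk' : k' < 4 * n) (heq : vt n hn σ k = vt n hn σ k') : k = k' := by
  have hm := vt_mod4 n hn σ k
  have hm' := vt_mod4 n hn σ k'
  rw [heq] at hm
  -- k % 4 = k' % 4
  obtain ⟨i, r, hr, rfl⟩ : ∃ i r, r < 4 ∧ k = 4 * i + r := ⟨k / 4, k % 4, by omega, by omega⟩
  obtain ⟨i', r', hr', rfl⟩ : ∃ i r, r < 4 ∧ k' = 4 * i + r := ⟨k' / 4, k' % 4, by omega, by omega⟩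
  have hrr : r = r' := by omega
  subst hrr
  have hi : i < n := by omega
  have hi' : i' < n := by omega
  have hval := congrArg Fin.val heq
  suffices h : i = i' by omega
  interval_cases r
  · simp only [Nat.add_zero] at hval
    rw [vt0 n hn σ i hi, vt0 n hn σ i' hi'] at hval
    omega
  · rw [vt1 n hn σ i hi, vt1 n hn σ i' hi'] at hval
    have h5 : σ ⟨i, hi⟩ = σ ⟨i', hi'⟩ := Fin.ext (by omega)
    exact congrArg Fin.val (σ.injective h5)
  · rw [vt2 n hn σ i hi, vt2 n hn σ i' hi'] at hval
    omega
  · rw [vt3 n hn σ i hi, vt3 n hn σ i' hi'] at hval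
    have h5 : σ ⟨i, hi⟩ = σ ⟨i', hi'⟩ := Fin.ext (by omega)
    exact congrArg Fin.val (σ.injective h5)

def pw (n : ℕ) (hn : 0 < n) (σ : Equiv.Perm (Fin n)) :
    (⊤ : SimpleGraph (Fin (4 * n))).Walk (vt n hn σ 0) (vt n hn σ (0 + (4 * n - 1))) :=
  mkWalk (vt n hn σ) 0 (4 * n - 1) (vt_step n hn σ)

lemma pw_support (n : ℕ) (hn : 0 < n) (σ : Equiv.Perm (Fin n)) :
    (pw n hn σ).support = (List.range (4 * n)).map (vt n hn σ) := by
  rw [pw, mkWalk_support, Nat.sub_add_cancel (by omega : 1 ≤ 4 * n)]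
  simp only [Nat.zero_add]

lemma pw_nodup (n : ℕ) (hn : 0 < n) (σ : Equiv.Perm (Fin n)) :
    ((List.range (4 * n)).map (vt n hn σ)).Nodup :=
  List.nodup_range.map_on fun x hx y hy h =>
    vt_inj n hn σ (List.mem_range.mp hx) (List.mem_range.mp hy) h

lemma pw_ham (n : ℕ) (hn : 0 < n) (σ : Equiv.Perm (Fin n)) : (pw n hn σ).IsHamiltonian := by
  intro v
  rw [pw_support]
  have hnd := pw_nodup n hn σ
  have h1 : ((List.range (4 * n)).map (vt n hn σ)).toFinset = Finset.univ :=
    Finset.eq_univ_of_card _ (by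
      rw [List.toFinset_card_of_nodup hnd]
      simp [Fintype.card_fin])
  have hv : v ∈ (List.range (4 * n)).map (vt n hn σ) := by
    rw [← List.mem_toFinset, h1]; exact Finset.mem_univ v
  exact List.count_eq_one_of_mem hnd hv

lemma pw_adj (n : ℕ) (hn : 0 < n) (σ : Equiv.Perm (Fin n)) (k : ℕ) (hk : k < 4 * n - 1) :
    (pw n hn σ).toSubgraph.Adj (vt n hn σ k) (vt n hn σ (k + 1)) :=
  mkWalk_adj _ 0 _ _ k (Nat.zero_le _) (by omega)

lemma walkUnion_comm {n : ℕ} {u v u' v' : Fin n}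
    (p : (⊤ : SimpleGraph (Fin n)).Walk u v) (q : (⊤ : SimpleGraph (Fin n)).Walk u' v') :
    walkUnion p q = walkUnion q p := by
  unfold walkUnion; rw [sup_comm]

def emb5 {N : ℕ} (x y b1 b2 a2 : Fin N) : Fin 2 ⊕ Fin 3 → Fin N
  | .inl ⟨0, _⟩ => x
  | .inl ⟨_ + 1, _⟩ => y
  | .inr ⟨0, _⟩ => b1
  | .inr ⟨1, _⟩ => b2
  | .inr ⟨_ + 2, _⟩ => a2

lemma build_K23 {N : ℕ} (G : SimpleGraph (Fin N)) (x y b1 b2 a2 : Fin N)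
    (ne1 : x ≠ y) (ne2 : x ≠ b1) (ne3 : x ≠ b2) (ne4 : x ≠ a2)
    (ne5 : y ≠ b1) (ne6 : y ≠ b2) (ne7 : y ≠ a2)
    (ne8 : b1 ≠ b2) (ne9 : b1 ≠ a2) (ne10 : b2 ≠ a2)
    (h1 : G.Adj x b1) (h2 : G.Adj x b2) (h3 : G.Adj x a2)
    (h4 : G.Adj y b1) (h5 : G.Adj y b2) (h6 : G.Adj y a2) :
    ContainsCopy (completeBipartiteGraph (Fin 2) (Fin 3)) G := by
  refine ⟨⟨emb5 x y b1 b2 a2, ?_⟩, ?_⟩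
  · intro z w h
    rcases z with ⟨zv, hz⟩ | ⟨zv, hz⟩ <;> rcases w with ⟨wv, hw⟩ | ⟨wv, hw⟩ <;>
      interval_cases zv <;> interval_cases wv <;>
      simp only [emb5] at h <;>
      simp_all
  · intro a b hab
    rcases a with ⟨av, ha⟩ | ⟨av, ha⟩ <;> rcases b with ⟨bv, hb⟩ | ⟨bv, hb⟩ <;>
      simp at hab
    · interval_cases av <;> interval_cases bv
      · exact h1
      · exact h2
      · exact h3
      · exact h4
      · exact h5
      · exact h6
    · interval_cases av <;> interval_cases bv
      · exact h1.symm
      · exact h4.symm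
      · exact h2.symm
      · exact h5.symm
      · exact h3.symm
      · exact h6.symm

lemma key (n : ℕ) (hn0 : 0 < n) (σ τ : Equiv.Perm (Fin n)) (i j : Fin n)
    (hj : (j : ℕ) = (i : ℕ) + 1) (hc : σ i = τ j) :
    ContainsCopy (completeBipartiteGraph (Fin 2) (Fin 3))
      (walkUnion (pw n hn0 σ) (pw n hn0 τ)) := by
  have hi : (i : ℕ) < n := i.isLt
  have hjn : (j : ℕ) < n := j.isLt
  have hcn : ((σ i : Fin n) : ℕ) < n := (σ i).isLt
  have px : 4 * ((σ i : Fin n) : ℕ) + 1 < 4 * n := by omega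
  have py : 4 * ((σ i : Fin n) : ℕ) + 3 < 4 * n := by omega
  have pbi : 4 * (i : ℕ) + 2 < 4 * n := by omega
  have pbj : 4 * (j : ℕ) + 2 < 4 * n := by omega
  have paj : 4 * (j : ℕ) < 4 * n := by omega
  have e1 : vt n hn0 σ (4 * (i : ℕ) + 1) = ⟨4 * (σ i : ℕ) + 1, px⟩ :=
    Fin.ext (by rw [vt1 n hn0 σ i hi, Fin.eta])
  have e2 : vt n hn0 σ (4 * (i : ℕ) + 2) = ⟨4 * (i : ℕ) + 2, pbi⟩ :=
    Fin.ext (vt2 n hn0 σ i hi)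
  have e3 : vt n hn0 σ (4 * (i : ℕ) + 3) = ⟨4 * (σ i : ℕ) + 3, py⟩ :=
    Fin.ext (by rw [vt3 n hn0 σ i hi, Fin.eta])
  have e4 : vt n hn0 σ (4 * (i : ℕ) + 3 + 1) = ⟨4 * (j : ℕ), paj⟩ := by
    rw [show 4 * (i : ℕ) + 3 + 1 = 4 * (j : ℕ) from by omega]
    exact Fin.ext (vt0 n hn0 σ j hjn)
  have f1 : vt n hn0 τ (4 * (j : ℕ)) = ⟨4 * (j : ℕ), paj⟩ :=
    Fin.ext (vt0 n hn0 τ j hjn)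
  have f2 : vt n hn0 τ (4 * (j : ℕ) + 1) = ⟨4 * (σ i : ℕ) + 1, px⟩ :=
    Fin.ext (by rw [vt1 n hn0 τ j hjn, Fin.eta, ← hc])
  have f3 : vt n hn0 τ (4 * (j : ℕ) + 2) = ⟨4 * (j : ℕ) + 2, pbj⟩ :=
    Fin.ext (vt2 n hn0 τ j hjn)
  have f4 : vt n hn0 τ (4 * (j : ℕ) + 3) = ⟨4 * (σ i : ℕ) + 3, py⟩ :=
    Fin.ext (by rw [vt3 n hn0 τ j hjn, Fin.eta, ← hc])
  have A1 := pw_adj n hn0 σ (4 * (i : ℕ) + 1) (by omega)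
  rw [show 4 * (i : ℕ) + 1 + 1 = 4 * (i : ℕ) + 2 from by omega, e1, e2] at A1
  have A2 := pw_adj n hn0 σ (4 * (i : ℕ) + 2) (by omega)
  rw [show 4 * (i : ℕ) + 2 + 1 = 4 * (i : ℕ) + 3 from by omega, e2, e3] at A2
  have A3 := pw_adj n hn0 σ (4 * (i : ℕ) + 3) (by omega)
  rw [e3, e4] at A3
  have B1 := pw_adj n hn0 τ (4 * (j : ℕ)) (by omega)
  rw [f1, f2] at B1
  have B2 := pw_adj n hn0 τ (4 * (j : ℕ) + 1) (by omega)
  rw [show 4 * (j : ℕ) + 1 + 1 = 4 * (j : ℕ) + 2 from by omega, f2, f3] at B2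
  have B3 := pw_adj n hn0 τ (4 * (j : ℕ) + 2) (by omega)
  rw [show 4 * (j : ℕ) + 2 + 1 = 4 * (j : ℕ) + 3 from by omega, f3, f4] at B3
  have goalAdj : ∀ u v : Fin (4 * n),
      (pw n hn0 σ).toSubgraph.Adj u v ∨ (pw n hn0 τ).toSubgraph.Adj u v →
      (walkUnion (pw n hn0 σ) (pw n hn0 τ)).Adj u v := by
    intro u v h
    show ((pw n hn0 σ).toSubgraph ⊔ (pw n hn0 τ).toSubgraph).spanningCoe.Adj u v
    rw [Subgraph.spanningCoe_adj, Subgraph.sup_adj]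
    exact h
  refine build_K23 _ ⟨4 * (σ i : ℕ) + 1, px⟩ ⟨4 * (σ i : ℕ) + 3, py⟩
    ⟨4 * (i : ℕ) + 2, pbi⟩ ⟨4 * (j : ℕ) + 2, pbj⟩ ⟨4 * (j : ℕ), paj⟩
    ?_ ?_ ?_ ?_ ?_ ?_ ?_ ?_ ?_ ?_
    (goalAdj _ _ (Or.inl A1)) (goalAdj _ _ (Or.inr B2)) (goalAdj _ _ (Or.inr B1.symm))
    (goalAdj _ _ (Or.inl A2.symm)) (goalAdj _ _ (Or.inr B3.symm)) (goalAdj _ _ (Or.inl A3)) <;>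
    · simp only [ne_eq, Fin.mk.injEq]
      omega

/-- If `F` is a family of pairwise colliding permutations of `{1, …, n}` (for any two distinct
`σ, τ ∈ F` there is `i` with `σ(i) = τ(i+1)` or `τ(i) = σ(i+1)`), then `H_{4n}(K_{2,3}) ≥ |F|`:
there is a family of `|F|` distinct Hamilton paths in `K_{4n}` such that the union of any two
distinct members contains `K_{2,3}` as a subgraph. -/
theorem Hn_K23_lower (n : ℕ) (hn : 2 ≤ n) (F : Finset (Equiv.Perm (Fin n)))
    (hF : ∀ σ ∈ F, ∀ τ ∈ F, σ ≠ τ →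
      ∃ i j : Fin n, (j : ℕ) = (i : ℕ) + 1 ∧ (σ i = τ j ∨ τ i = σ j)) :
    ∃ P : F → Σ u : Fin (4 * n), Σ v : Fin (4 * n), (⊤ : SimpleGraph (Fin (4 * n))).Walk u v,
      Function.Injective P ∧
      (∀ σ, (P σ).2.2.IsHamiltonian) ∧
      (∀ σ τ : F, σ ≠ τ →
        ContainsCopy (completeBipartiteGraph (Fin 2) (Fin 3))
          (walkUnion (P σ).2.2 (P τ).2.2)) := by
  have hn0 : 0 < n := by omega
  refine ⟨fun σ => ⟨_, _, pw n hn0 σ.1⟩, ?_, ?_, ?_⟩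
  · intro σ τ hPQ
    have hsup := congrArg
      (fun s : (Σ u : Fin (4 * n), Σ v : Fin (4 * n),
          (⊤ : SimpleGraph (Fin (4 * n))).Walk u v) => s.2.2.support) hPQ
    simp only at hsup
    rw [pw_support, pw_support] at hsup
    have hpt : ∀ k, k < 4 * n → vt n hn0 σ.1 k = vt n hn0 τ.1 k := by
      intro k hk
      have h1 : ((List.range (4 * n)).map (vt n hn0 σ.1))[k]'(by simpa using hk)
          = ((List.range (4 * n)).map (vt n hn0 τ.1))[k]'(by simpa using hk) := by
        simp only [hsup]
      simpa using h1
    apply Subtype.ext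
    apply Equiv.ext
    intro x
    have h := hpt (4 * (x : ℕ) + 1) (by have := x.isLt; omega)
    have h2 := congrArg Fin.val h
    rw [vt1 n hn0 σ.1 x x.isLt, vt1 n hn0 τ.1 x x.isLt, Fin.eta] at h2
    exact Fin.ext (by omega)
  · intro σ
    exact pw_ham n hn0 σ.1
  · intro σ τ hst
    obtain ⟨i, j, hj, hcase⟩ := hF σ.1 σ.2 τ.1 τ.2 (fun h => hst (Subtype.ext h))
    rcases hcase with hc | hc
    · exact key n hn0 σ.1 τ.1 i j hj hc
    · have := key n hn0 τ.1 σ.1 i j hj hc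
      rwa [walkUnion_comm] at this
end
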